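/- arXiv:2506.13659 — 6 statements merged into one kernel-verified Lean document; each statement's English description precedes it below -/
import Mathlib

section
/- Let H be a connected finite simple graph on t ≥ 2 vertices. If the support of the K_q-chromatic function h_H(−; K_q) is M-convex for some q ≥ t, then the support of h_H(−; G) is M-convex for every antiferromagnetic weighted graph G. -/
open SimpleGraph

/-- The weight a symmetric matrix `G` puts on an unordered pair of indices. -/
noncomputable def edgeWeight {n : ℕ} (G : Matrix (Fin n) (Fin n) ℝ) (hG : G.IsHermitian) :
    Sym2 (Fin n) → ℝ :=
  Sym2.lift ⟨fun i j => G i j, fun i j => by simpa using hG.apply j i⟩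

-- The `G`-chromatic function `h_H(x₁,…,x_n; G)`.
open scoped Classical in
noncomputable def chromPoly {V : Type} [Fintype V] {n : ℕ} (H : SimpleGraph V)
    (G : Matrix (Fin n) (Fin n) ℝ) (hG : G.IsHermitian) : MvPolynomial (Fin n) ℝ :=
  ∑ φ : V → Fin n,
    MvPolynomial.C (∏ e ∈ H.edgeFinset, edgeWeight G hG (e.map φ)) *
      ∏ v : V, MvPolynomial.X (φ v)

/-- `S ⊆ ℕ^n` is M-convex. -/
def MConvex {n : ℕ} (S : Set (Fin n →₀ ℕ)) : Prop :=
  ∀ a ∈ S, ∀ b ∈ S, ∀ i : Fin n, b i < a i →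
    ∃ j : Fin n, a j < b j ∧ a - Finsupp.single i 1 + Finsupp.single j 1 ∈ S

/-- The adjacency matrix of the complete graph `K_q`. -/
def adjKq (q : ℕ) : Matrix (Fin q) (Fin q) ℝ :=
  fun i j => if i = j then 0 else 1

lemma adjKq_isHermitian (q : ℕ) : (adjKq q).IsHermitian := by
  ext i j
  by_cases h : i = j <;>
    simp [adjKq, Matrix.conjTranspose_apply, h, eq_comm]

/-!
Reverse Cauchy–Schwarz for the quadratic form of `G`, which has at most one positive eigenvalue,
makes the support pattern of `G` rigid: a looped colour is adjacent to every active colour (one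
with a nonzero row), and non-adjacency is an equivalence relation on the active loopless colours,
whose classes are thus the parts of a complete multipartite graph. As `H` is connected with at
least two vertices, admissible colourings use active colours only.

Let `a`, `b` be colour counts of admissible colourings with `b i < a i`. If some `j` with
`a j < b j` is a loop, lies in the class of `i`, or is adjacent to every colour used by `a`, then
recolouring one vertex of colour `i` by `j` does the exchange. Otherwise every class used by `a`,
and each of the `a ℓ` vertices of every looped colour `ℓ`, becomes a key; there are at most
`t ≤ q` keys. Both colourings become proper colourings by the keys, the exchange is done there by
M-convexity (which passes from `q` to fewer colours), and the result is decoded by distributing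
the vertices of each key over the colours of its class.
-/

open Finset

section ColourCount

variable {V ι κ : Type*} [Fintype V]

noncomputable def colourCount (φ : V → ι) : ι →₀ ℕ :=
  ∑ v, Finsupp.single (φ v) 1

lemma colourCount_apply [DecidableEq ι] (φ : V → ι) (x : ι) :
    colourCount φ x = #{v | φ v = x} := by
  simp only [colourCount, Finsupp.finsetSum_apply, Finsupp.single_apply, card_filter]

lemma colourCount_apply_ne_zero_iff [DecidableEq ι] {φ : V → ι} {x : ι} :
    colourCount φ x ≠ 0 ↔ ∃ v, φ v = x := by
  simp [colourCount_apply]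

lemma degree_colourCount (φ : V → ι) : (colourCount φ).degree = Fintype.card V := by
  simp [colourCount, map_sum, Finsupp.degree_single]

lemma colourCount_embedding_comp (E : ι ↪ κ) (φ : V → ι) :
    colourCount (E ∘ φ) = (colourCount φ).embDomain E := by
  rw [colourCount, colourCount, ← Finsupp.embDomain.addMonoidHom_apply, map_sum]
  simp [Finsupp.embDomain_single]

lemma colourCount_update [DecidableEq V] (φ : V → ι) (u : V) (x : ι) :
    colourCount (Function.update φ u x) =
      colourCount φ - Finsupp.single (φ u) 1 + Finsupp.single x 1 := by
  have hsplit : ∀ ψ : V → ι, colourCount ψ =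
      Finsupp.single (ψ u) 1 + ∑ v ∈ univ.erase u, Finsupp.single (ψ v) 1 := fun ψ => by
    rw [colourCount, ← add_sum_erase _ _ (mem_univ u)]
  rw [hsplit, hsplit φ, Function.update_self, add_tsub_cancel_left, add_comm]
  congr 1
  exact sum_congr rfl fun v hv => by rw [Function.update_of_ne (ne_of_mem_erase hv)]

lemma exists_card_fiber_eq [DecidableEq ι] [Fintype κ] [DecidableEq κ] (p : V → ι)
    (m : ι → κ → ℕ) (hm : ∀ x, ∑ y, m x y = #{v | p v = x}) :
    ∃ f : V → κ, ∀ x y, #{v | p v = x ∧ f v = y} = m x y := by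
  have e : ∀ x, {v // p v = x} ≃ Σ y, Fin (m x y) := fun x =>
    Fintype.equivOfCardEq (by simp [Fintype.card_subtype, hm])
  refine ⟨fun v => (e (p v) ⟨v, rfl⟩).1, fun x y => ?_⟩
  have hf : ∀ w : {v // p v = x}, (e (p w) ⟨w, rfl⟩).1 = (e x w).1 := by
    rintro ⟨v, rfl⟩; rfl
  rw [← Fintype.card_subtype, ← Fintype.card_fin (m x y)]
  calc Fintype.card {v // p v = x ∧ (e (p v) ⟨v, rfl⟩).1 = y}
      = Fintype.card {w : {v // p v = x} // (e x w).1 = y} :=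
        Fintype.card_congr ((Equiv.subtypeSubtypeEquivSubtypeInter _ _).symm.trans
          (Equiv.subtypeEquivRight fun w => by rw [hf]))
    _ = Fintype.card {s : Σ y, Fin (m x y) // s.1 = y} :=
        Fintype.card_congr ((e x).subtypeEquiv fun _ => Iff.rfl)
    _ = Fintype.card (Fin (m x y)) := Fintype.card_congr (Equiv.sigmaSubtype y)

end ColourCount

section Admissible

variable {V : Type*} [Fintype V] {n : ℕ}

def IsAdmissible (H : SimpleGraph V) (G : Matrix (Fin n) (Fin n) ℝ) (φ : V → Fin n) : Prop :=
  ∀ u v, H.Adj u v → G (φ u) (φ v) ≠ 0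

def properCounts (H : SimpleGraph V) (ι : Type*) : Set (ι →₀ ℕ) :=
  colourCount '' {ψ : V → ι | ∀ u v, H.Adj u v → ψ u ≠ ψ v}

lemma prod_X_eq_monomial_colourCount (φ : V → Fin n) :
    ∏ v, (MvPolynomial.X (φ v) : MvPolynomial (Fin n) ℝ) =
      MvPolynomial.monomial (colourCount φ) 1 := by
  simp [colourCount, MvPolynomial.monomial_sum_one, MvPolynomial.X]

lemma coe_support_chromPoly {V : Type} [Fintype V] (H : SimpleGraph V)
    {G : Matrix (Fin n) (Fin n) ℝ} (hG : G.IsHermitian) (hnn : ∀ i j, 0 ≤ G i j) :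
    ((chromPoly H G hG).support : Set (Fin n →₀ ℕ)) = colourCount '' {φ | IsAdmissible H G φ} := by
  classical
  set w : (V → Fin n) → ℝ := fun φ => ∏ e ∈ H.edgeFinset, edgeWeight G hG (e.map φ)
  have hw_nonneg : ∀ φ, 0 ≤ w φ := fun φ =>
    prod_nonneg fun e _ => e.ind fun u v => hnn (φ u) (φ v)
  have hw_ne_zero : ∀ φ, w φ ≠ 0 ↔ IsAdmissible H G φ := fun φ => by
    simp only [w, prod_ne_zero_iff, Sym2.forall, SimpleGraph.mem_edgeFinset,
      SimpleGraph.mem_edgeSet, Sym2.map_mk]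
    rfl
  ext a
  have hcoeff : (chromPoly H G hG).coeff a = ∑ φ, if colourCount φ = a then w φ else 0 := by
    simp only [chromPoly, MvPolynomial.coeff_sum, prod_X_eq_monomial_colourCount,
      MvPolynomial.coeff_C_mul, MvPolynomial.coeff_monomial, mul_ite, mul_one, mul_zero, w]
  rw [mem_coe, MvPolynomial.mem_support_iff, hcoeff, Ne,
    sum_eq_zero_iff_of_nonneg fun φ _ => by split_ifs <;> simp [hw_nonneg]]
  simp [hw_ne_zero, and_comm]

lemma coe_support_chromPoly_adjKq {V : Type} [Fintype V] (H : SimpleGraph V) (q : ℕ) :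
    ((chromPoly H (adjKq q) (adjKq_isHermitian q)).support : Set (Fin q →₀ ℕ)) =
      properCounts H (Fin q) := by
  rw [coe_support_chromPoly _ _ fun i j => by unfold adjKq; split_ifs <;> norm_num]
  simp [properCounts, IsAdmissible, adjKq]

end Admissible

section Transfer

variable {V : Type*} [Fintype V] {n : ℕ} {H : SimpleGraph V} {G : Matrix (Fin n) (Fin n) ℝ}
  {ι : Type*} [Fintype ι] [DecidableEq ι]

lemma exists_proper_of_sum_eq_colourCount {φ : V → Fin n} (hφ : IsAdmissible H G φ)
    (d : ι → Fin n →₀ ℕ) (hsum : ∑ x, d x = colourCount φ)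
    (hind : ∀ x, (d x).degree ≤ 1 ∨ ∀ k ∈ (d x).support, ∀ l ∈ (d x).support, G k l = 0) :
    ∃ ψ : V → ι, (∀ u v, H.Adj u v → ψ u ≠ ψ v) ∧ ∀ x, colourCount ψ x = (d x).degree := by
  obtain ⟨ψ, hψ⟩ := exists_card_fiber_eq φ (fun k x => d x k) fun k => by
    rw [← colourCount_apply, ← hsum, Finsupp.finsetSum_apply]
  have hcount : ∀ x, colourCount ψ x = (d x).degree := fun x => by
    rw [colourCount_apply, Finsupp.degree_eq_sum,
      card_eq_sum_card_fiberwise (f := φ) (t := univ) (by simp)]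
    refine sum_congr rfl fun k _ => ?_
    rw [← hψ, filter_filter]
    simp only [and_comm]
  refine ⟨ψ, fun u v huv hψuv => ?_, hcount⟩
  have hmem : ∀ w, φ w ∈ (d (ψ w)).support := fun w => by
    rw [Finsupp.mem_support_iff, ← hψ]
    exact card_ne_zero.2 ⟨w, by simp⟩
  rcases hind (ψ u) with hle | hzero
  · have : 1 < colourCount ψ (ψ u) := by
      rw [colourCount_apply]
      exact one_lt_card.2 ⟨u, by simp, v, by simp [hψuv], H.ne_of_adj huv⟩
    rw [hcount] at this
    omega
  · exact hφ u v huv (hzero _ (hmem u) _ (hψuv ▸ hmem v))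

lemma sum_mem_image_admissible {ψ : V → ι} (hψ : ∀ u v, H.Adj u v → ψ u ≠ ψ v)
    (d : ι → Fin n →₀ ℕ) (hdeg : ∀ x, colourCount ψ x = (d x).degree)
    (hcross : ∀ x y, x ≠ y → ∀ k ∈ (d x).support, ∀ l ∈ (d y).support, G k l ≠ 0) :
    ∑ x, d x ∈ colourCount '' {φ | IsAdmissible H G φ} := by
  obtain ⟨φ, hφ⟩ := exists_card_fiber_eq ψ (fun x k => d x k) fun x => by
    rw [← Finsupp.degree_eq_sum, ← hdeg, colourCount_apply]
  have hmem : ∀ w, φ w ∈ (d (ψ w)).support := fun w => by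
    rw [Finsupp.mem_support_iff, ← hφ]
    exact card_ne_zero.2 ⟨w, by simp⟩
  refine ⟨φ, fun u v huv => hcross _ _ (hψ u v huv) _ (hmem u) _ (hmem v), ?_⟩
  ext k
  rw [colourCount_apply, Finsupp.finsetSum_apply,
    card_eq_sum_card_fiberwise (f := ψ) (t := univ) (by simp)]
  refine sum_congr rfl fun x _ => ?_
  rw [← hφ, filter_filter]
  simp only [and_comm]

end Transfer

lemma MConvex.preimage_embDomain {m q : ℕ} {S : Set (Fin q →₀ ℕ)} (hS : MConvex S)
    (E : Fin m ↪ Fin q) : MConvex {c | c.embDomain E ∈ S} := by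
  intro a ha b hb i hi
  obtain ⟨j', hj', hmem⟩ := hS _ ha _ hb (E i) (by simpa [Finsupp.embDomain_apply_self] using hi)
  obtain ⟨j, rfl⟩ : j' ∈ Set.range E := by
    by_contra h
    simp [Finsupp.embDomain_of_notMem_range _ _ _ h] at hj'
  refine ⟨j, by simpa [Finsupp.embDomain_apply_self] using hj', ?_⟩
  have hexch : (a - Finsupp.single i 1 + Finsupp.single j 1).embDomain E =
      a.embDomain E - Finsupp.single (E i) 1 + Finsupp.single (E j) 1 := by
    ext x
    by_cases hx : x ∈ Set.range E
    · obtain ⟨y, rfl⟩ := hx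
      simp [Finsupp.embDomain_apply_self, Finsupp.single_apply, E.injective.eq_iff]
    · have hxi : E i ≠ x := fun h => hx ⟨i, h⟩
      have hxj : E j ≠ x := fun h => hx ⟨j, h⟩
      simp [Finsupp.embDomain_of_notMem_range _ _ _ hx, hxi, hxj]
  simpa [hexch] using hmem

lemma embDomain_mem_properCounts_iff {V : Type*} [Fintype V] (H : SimpleGraph V)
    {ι κ : Type*} [DecidableEq κ] (E : ι ↪ κ) (c : ι →₀ ℕ) :
    c.embDomain E ∈ properCounts H κ ↔ c ∈ properCounts H ι := by
  constructor
  · rintro ⟨ψ, hψ, hc⟩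
    have hrange : ∀ v, ∃ x, E x = ψ v := fun v => by
      by_contra h
      have := Finsupp.embDomain_of_notMem_range E c (ψ v) (by simpa using h)
      rw [← hc, colourCount_apply] at this
      exact (card_ne_zero.2 ⟨v, by simp⟩) this
    choose f hf using hrange
    have hψf : ψ = E ∘ f := funext fun v => (hf v).symm
    subst hψf
    refine ⟨f, fun u v huv h => hψ u v huv (congrArg E h), ?_⟩
    rw [colourCount_embedding_comp] at hc
    exact Finsupp.embDomain_injective E hc
  · rintro ⟨ψ, hψ, rfl⟩
    exact ⟨E ∘ ψ, fun u v huv h => hψ u v huv (E.injective h), colourCount_embedding_comp E ψ⟩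

lemma MConvex.properCounts_of_le {V : Type*} [Fintype V] {H : SimpleGraph V} {m q : ℕ}
    (hq : MConvex (properCounts H (Fin q))) (hm : m ≤ q) : MConvex (properCounts H (Fin m)) := by
  simpa [embDomain_mem_properCounts_iff] using hq.preimage_embDomain (Fin.castLEEmb hm)

open Matrix

section Antiferromagnetic

variable {n : ℕ} {G : Matrix (Fin n) (Fin n) ℝ}

lemma Matrix.IsHermitian.dotProduct_mulVec_eq_sum (hG : G.IsHermitian) (x y : Fin n → ℝ) :
    x ⬝ᵥ G *ᵥ y = ∑ k, hG.eigenvalues k * (⇑(hG.eigenvectorBasis k) ⬝ᵥ x) *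
      (⇑(hG.eigenvectorBasis k) ⬝ᵥ y) := by
  set b := hG.eigenvectorBasis
  have hG_apply : ∀ i j, G i j = ∑ k, hG.eigenvalues k * b k i * b k j := fun i j => by
    conv_lhs => rw [hG.spectral_theorem]
    simp [b, Unitary.conjStarAlgAut_apply, Matrix.mul_apply, Matrix.diagonal, mul_comm]
  calc x ⬝ᵥ G *ᵥ y = ∑ i, ∑ k, ∑ j, hG.eigenvalues k * (b k i * x i) * (b k j * y j) := by
        simp only [dotProduct, mulVec, hG_apply, mul_sum, sum_mul]
        refine sum_congr rfl fun i _ => ?_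
        rw [sum_comm]
        exact sum_congr rfl fun k _ => sum_congr rfl fun j _ => by ring
    _ = _ := by
        rw [sum_comm]
        simp only [dotProduct, mul_sum, sum_mul]
        exact sum_congr rfl fun k _ => sum_comm

lemma Matrix.IsHermitian.dotProduct_mulVec_comm (hG : G.IsHermitian) (x y : Fin n → ℝ) :
    x ⬝ᵥ G *ᵥ y = y ⬝ᵥ G *ᵥ x := by
  simp only [hG.dotProduct_mulVec_eq_sum, mul_right_comm]

lemma dotProduct_mulVec_ne_zero_of_pos (hG : G.IsHermitian)
    (hafm : {i | 0 < hG.eigenvalues i}.Subsingleton) {x y : Fin n → ℝ}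
    (hx : 0 < x ⬝ᵥ G *ᵥ x) (hy : 0 < y ⬝ᵥ G *ᵥ y) : x ⬝ᵥ G *ᵥ y ≠ 0 := by
  intro hxy
  set μ := hG.eigenvalues
  set c : Fin n → (Fin n → ℝ) → ℝ := fun k z => ⇑(hG.eigenvectorBasis k) ⬝ᵥ z
  have hQ : ∀ z, z ⬝ᵥ G *ᵥ z = ∑ k, μ k * c k z * c k z := fun z => hG.dotProduct_mulVec_eq_sum z z
  by_cases hpos : ∃ k₀, 0 < μ k₀
  swap
  · push Not at hpos
    refine hx.not_ge ((hQ x).symm ▸ sum_nonpos fun k _ => ?_)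
    nlinarith [hpos k, mul_self_nonneg (c k x)]
  obtain ⟨k₀, hk₀⟩ := hpos
  -- the form is negative semidefinite on the hyperplane `c k₀ = 0`
  have hnonpos : ∀ z, c k₀ z = 0 → z ⬝ᵥ G *ᵥ z ≤ 0 := fun z hz => (hQ z).symm ▸
    sum_nonpos fun k _ => by
      rcases eq_or_ne k k₀ with rfl | hk
      · simp [hz]
      · nlinarith [not_lt.1 fun h : 0 < μ k => hk (hafm h hk₀), mul_self_nonneg (c k z)]
  have hyx : y ⬝ᵥ G *ᵥ x = 0 := by rw [hG.dotProduct_mulVec_comm, hxy]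
  set z := c k₀ y • x - c k₀ x • y
  have hz : c k₀ z = 0 := by simp only [c, z, dotProduct_sub, dotProduct_smul, smul_eq_mul]; ring
  have hQz : z ⬝ᵥ G *ᵥ z = c k₀ y ^ 2 * (x ⬝ᵥ G *ᵥ x) + c k₀ x ^ 2 * (y ⬝ᵥ G *ᵥ y) := by
    simp only [z, mulVec_sub, mulVec_smul, dotProduct_sub, sub_dotProduct, dotProduct_smul,
      smul_dotProduct, smul_eq_mul, hxy, hyx]
    ring
  have hcx : c k₀ x ^ 2 = 0 := by
    have := hQz ▸ hnonpos z hz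
    nlinarith [mul_nonneg (sq_nonneg (c k₀ y)) hx.le, sq_nonneg (c k₀ x)]
  exact hx.not_ge (hnonpos x (pow_eq_zero_iff two_ne_zero |>.1 hcx))

lemma mul_le_sq_dotProduct_mulVec (hG : G.IsHermitian)
    (hafm : {i | 0 < hG.eigenvalues i}.Subsingleton) {x : Fin n → ℝ} (hx : 0 < x ⬝ᵥ G *ᵥ x)
    (y : Fin n → ℝ) : (x ⬝ᵥ G *ᵥ x) * (y ⬝ᵥ G *ᵥ y) ≤ (x ⬝ᵥ G *ᵥ y) ^ 2 := by
  set z := (x ⬝ᵥ G *ᵥ x) • y - (x ⬝ᵥ G *ᵥ y) • x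
  have hxz : x ⬝ᵥ G *ᵥ z = 0 := by
    simp only [z, mulVec_sub, mulVec_smul, dotProduct_sub, dotProduct_smul, smul_eq_mul]
    ring
  have hQz : z ⬝ᵥ G *ᵥ z =
      (x ⬝ᵥ G *ᵥ x) * ((x ⬝ᵥ G *ᵥ x) * (y ⬝ᵥ G *ᵥ y) - (x ⬝ᵥ G *ᵥ y) ^ 2) := by
    simp only [z, mulVec_sub, mulVec_smul, dotProduct_sub, sub_dotProduct, dotProduct_smul,
      smul_dotProduct, smul_eq_mul, hG.dotProduct_mulVec_comm y x]
    ring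
  have hz : z ⬝ᵥ G *ᵥ z ≤ 0 :=
    not_lt.1 fun hz => dotProduct_mulVec_ne_zero_of_pos hG hafm hx hz hxz
  nlinarith

lemma single_dotProduct_mulVec_single (i j : Fin n) (a b : ℝ) :
    Pi.single i a ⬝ᵥ G *ᵥ Pi.single j b = a * G i j * b := by
  simp [mulVec, dotProduct, Pi.single_apply, mul_assoc]

def IsActive (G : Matrix (Fin n) (Fin n) ℝ) (k : Fin n) : Prop := ∃ l, G k l ≠ 0

lemma apply_ne_zero_of_apply_self_ne_zero (hG : G.IsHermitian) (hnn : ∀ i j, 0 ≤ G i j)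
    (hafm : {i | 0 < hG.eigenvalues i}.Subsingleton) {k l : Fin n} (hk : G k k ≠ 0)
    (hl : IsActive G l) : G k l ≠ 0 := by
  intro hkl
  obtain ⟨p, hp⟩ := hl
  have hα : 0 < G k k := (hnn k k).lt_of_ne' hk
  have hc : 0 < G l p := (hnn l p).lt_of_ne' hp
  set s := (G k p ^ 2 + 1) / (G k k * G l p)
  have hs : s * (G k k * G l p) = G k p ^ 2 + 1 := div_mul_cancel₀ _ (by positivity)
  have hs0 : 0 ≤ s := by positivity
  -- testing `e k` against `s • e l + e p` gives `G k k * (2 * s * G l p) ≤ G k p ^ 2`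
  have hCS := mul_le_sq_dotProduct_mulVec hG hafm (x := Pi.single k 1)
    (by simpa [single_dotProduct_mulVec_single] using hα) (Pi.single l s + Pi.single p 1)
  simp only [dotProduct_add, mulVec_add, add_dotProduct, single_dotProduct_mulVec_single, hkl,
    (isHermitian_iff_isSymm.1 hG).apply l p] at hCS
  nlinarith [mul_nonneg hα.le (mul_nonneg (mul_nonneg hs0 (hnn l l)) hs0),
    mul_nonneg hα.le (hnn p p)]

lemma apply_eq_zero_trans (hG : G.IsHermitian) (hnn : ∀ i j, 0 ≤ G i j)
    (hafm : {i | 0 < hG.eigenvalues i}.Subsingleton) {i j k : Fin n} (hi : IsActive G i)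
    (hj : IsActive G j) (hij : G i j = 0) (hjk : G j k = 0) : G i k = 0 := by
  have hsymm := (isHermitian_iff_isSymm.1 hG).apply
  by_contra hik
  have hii : G i i = 0 := by_contra fun h =>
    apply_ne_zero_of_apply_self_ne_zero hG hnn hafm h hj hij
  have hjj : G j j = 0 := by_contra fun h =>
    apply_ne_zero_of_apply_self_ne_zero hG hnn hafm h hi (by rwa [hsymm])
  obtain ⟨p, hp⟩ := hj
  have he : 0 < G i k := (hnn i k).lt_of_ne' hik
  have hc : 0 < G j p := (hnn j p).lt_of_ne' hp
  set Qx := G k k + 2 * G i k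
  have hQx : 0 < Qx := by linarith [hnn k k]
  set h := G i p + G k p
  set s := G j p * Qx / (h ^ 2 + 1)
  have hs : s * (h ^ 2 + 1) = G j p * Qx := div_mul_cancel₀ _ (by positivity)
  have hs0 : 0 < s := by positivity
  -- testing `e i + e k` against `e j + s • e p`: the right side of reverse Cauchy–Schwarz is
  -- `(s * h) ^ 2`, the left side at least `Qx * 2 * s * G j p`, absurd for small `s`
  have hCS := mul_le_sq_dotProduct_mulVec hG hafm (x := Pi.single i 1 + Pi.single k 1)
    (by simp only [dotProduct_add, mulVec_add, add_dotProduct, single_dotProduct_mulVec_single,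
      hii, hsymm i k]; linarith) (Pi.single j 1 + Pi.single p s)
  simp only [dotProduct_add, mulVec_add, add_dotProduct, single_dotProduct_mulVec_single, hii,
    hjj, hij, hsymm i k, hsymm j k, hjk, hsymm j p] at hCS
  nlinarith [mul_nonneg hQx.le (mul_nonneg (mul_nonneg hs0.le (hnn p p)) hs0.le),
    mul_pos (mul_pos hs0 hc) hQx]

end Antiferromagnetic

section ColourKeys

variable {n : ℕ} {G : Matrix (Fin n) (Fin n) ℝ}

open scoped Classical in
/-- For an active loopless `k`, its part in the complete multipartite graph that `G` induces on
the active loopless colours. -/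
noncomputable def colourClass (G : Matrix (Fin n) (Fin n) ℝ) (k : Fin n) : Finset (Fin n) :=
  {l | IsActive G l ∧ G k l = 0}

lemma mem_colourClass {k l : Fin n} : l ∈ colourClass G k ↔ IsActive G l ∧ G k l = 0 := by
  simp [colourClass]

lemma colourClass_eq_of_apply_eq_zero (hG : G.IsHermitian) (hnn : ∀ i j, 0 ≤ G i j)
    (hafm : {i | 0 < hG.eigenvalues i}.Subsingleton) {k l : Fin n} (hk : IsActive G k)
    (hl : IsActive G l) (hkl : G k l = 0) : colourClass G k = colourClass G l := by
  have hlk : G l k = 0 := by rwa [(isHermitian_iff_isSymm.1 hG).apply]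
  ext m
  simp only [mem_colourClass, and_congr_right_iff]
  exact fun _ => ⟨apply_eq_zero_trans hG hnn hafm hl hk hlk,
    apply_eq_zero_trans hG hnn hafm hk hl hkl⟩

lemma mem_colourClass_iff_eq (hG : G.IsHermitian) (hnn : ∀ i j, 0 ≤ G i j)
    (hafm : {i | 0 < hG.eigenvalues i}.Subsingleton) {k l : Fin n} (hk : IsActive G k)
    (hkk : G k k = 0) (hl : IsActive G l) :
    l ∈ colourClass G k ↔ colourClass G k = colourClass G l := by
  refine ⟨fun h => colourClass_eq_of_apply_eq_zero hG hnn hafm hk hl (mem_colourClass.1 h).2,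
    fun h => ?_⟩
  have : G l k = 0 := (mem_colourClass.1 (h ▸ mem_colourClass.2 ⟨hk, hkk⟩)).2
  exact mem_colourClass.2 ⟨hl, by rwa [(isHermitian_iff_isSymm.1 hG).apply]⟩

lemma apply_eq_zero_of_mem_colourClass (hG : G.IsHermitian) (hnn : ∀ i j, 0 ≤ G i j)
    (hafm : {i | 0 < hG.eigenvalues i}.Subsingleton) {k l m : Fin n} (hk : IsActive G k)
    (hl : l ∈ colourClass G k) (hm : m ∈ colourClass G k) : G l m = 0 := by
  rw [mem_colourClass] at hl hm
  exact apply_eq_zero_trans hG hnn hafm hl.1 hk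
    (by rw [(isHermitian_iff_isSymm.1 hG).apply]; exact hl.2) hm.2

/-- A colour class of `G`, or a slot `(ℓ, m)` holding the `m`-th vertex of a looped colour `ℓ`. -/
abbrev ColourKey (n : ℕ) := Finset (Fin n) ⊕ (Σ _ : Fin n, ℕ)

def keyColours : ColourKey n → Finset (Fin n)
  | .inl r => r
  | .inr s => {s.1}

noncomputable def keyPart (c : Fin n →₀ ℕ) : ColourKey n → Fin n →₀ ℕ
  | .inl r => c.filter (· ∈ r)
  | .inr s => if s.2 < c s.1 then Finsupp.single s.1 1 else 0

open scoped Classical in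
noncomputable def usedClasses (G : Matrix (Fin n) (Fin n) ℝ) (a : Fin n →₀ ℕ) :
    Finset (Finset (Fin n)) :=
  {k ∈ a.support | IsActive G k ∧ G k k = 0}.image (colourClass G)

open scoped Classical in
noncomputable def loopSlots (G : Matrix (Fin n) (Fin n) ℝ) (a : Fin n →₀ ℕ) :
    Finset (Σ _ : Fin n, ℕ) :=
  ({ℓ | G ℓ ℓ ≠ 0} : Finset (Fin n)).sigma fun ℓ => range (a ℓ)

noncomputable def colourKeys (G : Matrix (Fin n) (Fin n) ℝ) (a : Fin n →₀ ℕ) :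
    Finset (ColourKey n) :=
  (usedClasses G a).disjSum (loopSlots G a)

lemma card_colourKeys_le (a : Fin n →₀ ℕ) : #(colourKeys G a) ≤ a.degree := by
  classical
  have hloopless : #{k ∈ a.support | IsActive G k ∧ G k k = 0} ≤ ∑ k with G k k = 0, a k :=
    calc #{k ∈ a.support | IsActive G k ∧ G k k = 0}
        ≤ ∑ k ∈ a.support with IsActive G k ∧ G k k = 0, a k :=
          (card_eq_sum_ones _).trans_le <| sum_le_sum fun k hk =>
            Nat.one_le_iff_ne_zero.2 (Finsupp.mem_support_iff.1 (mem_filter.1 hk).1)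
      _ ≤ ∑ k with G k k = 0, a k :=
          sum_le_sum_of_subset_of_nonneg (fun k => by simp +contextual) fun _ _ _ => Nat.zero_le _
  rw [colourKeys, usedClasses, loopSlots, card_disjSum, card_sigma, Finsupp.degree_eq_sum,
    ← sum_filter_add_sum_filter_not univ fun k => G k k = 0]
  simp only [card_range]
  exact add_le_add (card_image_le.trans hloopless) le_rfl

lemma inl_mem_colourKeys {a : Fin n →₀ ℕ} {r : Finset (Fin n)} :
    (.inl r : ColourKey n) ∈ colourKeys G a ↔
      ∃ k, a k ≠ 0 ∧ IsActive G k ∧ G k k = 0 ∧ colourClass G k = r := by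
  simp [colourKeys, usedClasses, and_assoc]

lemma inr_mem_colourKeys {a : Fin n →₀ ℕ} {s : Σ _ : Fin n, ℕ} :
    (.inr s : ColourKey n) ∈ colourKeys G a ↔ G s.1 s.1 ≠ 0 ∧ s.2 < a s.1 := by
  simp [colourKeys, loopSlots]

lemma isActive_of_mem_keyColours {a : Fin n →₀ ℕ} {κ : ColourKey n} (hκ : κ ∈ colourKeys G a)
    {k : Fin n} (hk : k ∈ keyColours κ) : IsActive G k := by
  rcases κ with r | s
  · obtain ⟨k₀, -, -, -, rfl⟩ := inl_mem_colourKeys.1 hκ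
    exact (mem_colourClass.1 hk).1
  · obtain rfl : k = s.1 := mem_singleton.1 hk
    exact ⟨s.1, (inr_mem_colourKeys.1 hκ).1⟩

lemma support_keyPart_subset (c : Fin n →₀ ℕ) (κ : ColourKey n) :
    (keyPart c κ).support ⊆ keyColours κ := by
  rcases κ with r | s
  · exact fun k hk => by simp_all [keyPart, keyColours]
  · simp only [keyPart, keyColours]
    split_ifs <;> simp

lemma degree_keyPart_inl (c : Fin n →₀ ℕ) (r : Finset (Fin n)) :
    (keyPart c (.inl r)).degree = ∑ k ∈ r, c k := by
  simp [keyPart, Finsupp.degree_eq_sum, Finsupp.filter_apply, sum_ite_mem]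

lemma exists_lt_of_degree_keyPart_lt {a b : Fin n →₀ ℕ} {κ : ColourKey n}
    (h : (keyPart a κ).degree < (keyPart b κ).degree) : ∃ j ∈ keyColours κ, a j < b j := by
  rcases κ with r | s
  · rw [degree_keyPart_inl, degree_keyPart_inl] at h
    exact exists_lt_of_sum_lt h
  · refine ⟨s.1, mem_singleton_self _, ?_⟩
    simp only [keyPart] at h
    split_ifs at h <;> simp at h
    omega

lemma degree_keyPart_le_one_or (hG : G.IsHermitian) (hnn : ∀ i j, 0 ≤ G i j)
    (hafm : {i | 0 < hG.eigenvalues i}.Subsingleton) {a : Fin n →₀ ℕ} {κ : ColourKey n}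
    (hκ : κ ∈ colourKeys G a) (c : Fin n →₀ ℕ) :
    (keyPart c κ).degree ≤ 1 ∨
      ∀ k ∈ (keyPart c κ).support, ∀ l ∈ (keyPart c κ).support, G k l = 0 := by
  rcases κ with r | s
  · obtain ⟨k₀, -, hk₀, -, rfl⟩ := inl_mem_colourKeys.1 hκ
    exact .inr fun k hk l hl => apply_eq_zero_of_mem_colourClass hG hnn hafm hk₀
      (support_keyPart_subset c _ hk) (support_keyPart_subset c _ hl)
  · left
    simp only [keyPart]
    split_ifs <;> simp

lemma apply_ne_zero_of_mem_keyColours (hG : G.IsHermitian) (hnn : ∀ i j, 0 ≤ G i j)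
    (hafm : {i | 0 < hG.eigenvalues i}.Subsingleton) {a : Fin n →₀ ℕ} {κ κ' : ColourKey n}
    (hκ : κ ∈ colourKeys G a) (hκ' : κ' ∈ colourKeys G a) (hne : κ ≠ κ') {k l : Fin n}
    (hk : k ∈ keyColours κ) (hl : l ∈ keyColours κ') : G k l ≠ 0 := by
  have hka := isActive_of_mem_keyColours hκ hk
  have hla := isActive_of_mem_keyColours hκ' hl
  rcases κ with r | s
  · rcases κ' with r' | s'
    · obtain ⟨k₀, -, hk₀, hk₀k₀, rfl⟩ := inl_mem_colourKeys.1 hκ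
      obtain ⟨l₀, -, hl₀, hl₀l₀, rfl⟩ := inl_mem_colourKeys.1 hκ'
      rw [keyColours, mem_colourClass_iff_eq hG hnn hafm hk₀ hk₀k₀ hka] at hk
      rw [keyColours, mem_colourClass_iff_eq hG hnn hafm hl₀ hl₀l₀ hla] at hl
      intro hkl
      refine hne (congrArg Sum.inl ?_)
      rw [hk, hl, colourClass_eq_of_apply_eq_zero hG hnn hafm hka hla hkl]
    · obtain rfl : l = s'.1 := mem_singleton.1 hl
      rw [(isHermitian_iff_isSymm.1 hG).apply]
      exact apply_ne_zero_of_apply_self_ne_zero hG hnn hafm (inr_mem_colourKeys.1 hκ').1 hka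
  · obtain rfl : k = s.1 := mem_singleton.1 hk
    exact apply_ne_zero_of_apply_self_ne_zero hG hnn hafm (inr_mem_colourKeys.1 hκ).1 hla

lemma sum_keyPart_inl_apply (hG : G.IsHermitian) (hnn : ∀ i j, 0 ≤ G i j)
    (hafm : {i | 0 < hG.eigenvalues i}.Subsingleton) {a c : Fin n →₀ ℕ} {k : Fin n}
    (hact : c k ≠ 0 → IsActive G k)
    (hclass : c k ≠ 0 → G k k = 0 → colourClass G k ∈ usedClasses G a) :
    ∑ r ∈ usedClasses G a, keyPart c (.inl r) k = if G k k = 0 then c k else 0 := by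
  classical
  simp only [keyPart, Finsupp.filter_apply]
  by_cases hc : c k = 0
  · simp [hc]
  have hmem : ∀ r ∈ usedClasses G a, k ∈ r ↔ G k k = 0 ∧ colourClass G k = r := fun r hr => by
    obtain ⟨k₀, hk₀, rfl⟩ := mem_image.1 hr
    simp only [mem_filter] at hk₀
    rw [mem_colourClass_iff_eq hG hnn hafm hk₀.2.1 hk₀.2.2 (hact hc), eq_comm, iff_and_self]
    intro h
    have : k₀ ∈ colourClass G k := h ▸ mem_colourClass.2 ⟨hk₀.2.1, hk₀.2.2⟩
    exact by_contra fun hk => apply_ne_zero_of_apply_self_ne_zero hG hnn hafm hk hk₀.2.1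
      (mem_colourClass.1 this).2
  rw [sum_congr rfl fun r hr => if_congr (hmem r hr) rfl rfl]
  split_ifs with hk
  · simp only [hk, true_and]
    rw [sum_ite_eq, if_pos (hclass hc hk)]
  · simp [hk]

lemma sum_keyPart_inr_apply {a c : Fin n →₀ ℕ} {k : Fin n} (hloop : G k k ≠ 0 → c k ≤ a k) :
    ∑ s ∈ loopSlots G a, keyPart c (.inr s) k = if G k k = 0 then 0 else c k := by
  classical
  have hslot : ∀ s : Σ _ : Fin n, ℕ,
      keyPart c (.inr s) k = if s.1 = k ∧ s.2 < c k then 1 else 0 := by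
    rintro ⟨ℓ, m⟩
    by_cases h : ℓ = k
    · subst h
      simp only [keyPart, true_and]
      split_ifs <;> simp
    · simp only [keyPart, h, false_and, if_false]
      split_ifs <;> simp [h]
  simp only [loopSlots, sum_sigma, hslot]
  split_ifs with hk
  · exact sum_eq_zero fun ℓ hℓ => sum_eq_zero fun m _ => if_neg <| by
      rintro ⟨rfl, -⟩; exact (mem_filter.1 hℓ).2 hk
  rw [sum_eq_single k (fun ℓ _ hℓk => sum_eq_zero fun m _ => if_neg fun h => hℓk h.1)
    (fun hk' => absurd (mem_filter.2 ⟨mem_univ k, hk⟩) hk')]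
  have hcount : (range (a k)).filter (· < c k) = range (c k) := by
    ext m
    simp only [mem_filter, mem_range]
    have := hloop hk
    omega
  simp only [true_and, sum_boole, hcount, card_range, Nat.cast_id]

lemma sum_keyPart (hG : G.IsHermitian) (hnn : ∀ i j, 0 ≤ G i j)
    (hafm : {i | 0 < hG.eigenvalues i}.Subsingleton) {a c : Fin n →₀ ℕ}
    (hact : ∀ k, c k ≠ 0 → IsActive G k)
    (hclass : ∀ k, c k ≠ 0 → G k k = 0 → .inl (colourClass G k) ∈ colourKeys G a)
    (hloop : ∀ ℓ, G ℓ ℓ ≠ 0 → c ℓ ≤ a ℓ) :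
    ∑ κ ∈ colourKeys G a, keyPart c κ = c := by
  ext k
  rw [Finsupp.finsetSum_apply, colourKeys, sum_disjSum,
    sum_keyPart_inl_apply hG hnn hafm (hact k) fun hc hk => inl_mem_disjSum.1 (hclass k hc hk),
    sum_keyPart_inr_apply (hloop k)]
  split_ifs <;> simp

end ColourKeys

section Recolouring

variable {V : Type*} {n : ℕ} {H : SimpleGraph V} {G : Matrix (Fin n) (Fin n) ℝ}

lemma isActive_of_colourCount_ne_zero [Fintype V] {φ : V → Fin n} (hφ : IsAdmissible H G φ)
    (hnbr : ∀ v, ∃ w, H.Adj v w) {k : Fin n} (hk : colourCount φ k ≠ 0) : IsActive G k := by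
  obtain ⟨v, rfl⟩ := colourCount_apply_ne_zero_iff.1 hk
  obtain ⟨w, hvw⟩ := hnbr v
  exact ⟨φ w, hφ v w hvw⟩

lemma isAdmissible_update [DecidableEq V] (hG : G.IsHermitian) {φ : V → Fin n}
    (hφ : IsAdmissible H G φ) {u : V} {j : Fin n} (hj : ∀ w, H.Adj u w → G j (φ w) ≠ 0) :
    IsAdmissible H G (Function.update φ u j) := by
  intro v w hvw
  by_cases hv : v = u
  · subst hv
    rw [Function.update_self, Function.update_of_ne (H.ne_of_adj hvw).symm]
    exact hj w hvw
  by_cases hw : w = u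
  · subst hw
    rw [Function.update_self, Function.update_of_ne hv, (isHermitian_iff_isSymm.1 hG).apply]
    exact hj v hvw.symm
  rw [Function.update_of_ne hv, Function.update_of_ne hw]
  exact hφ v w hvw

lemma sub_add_single_mem_of_update [Fintype V] (hG : G.IsHermitian) (hnn : ∀ i j, 0 ≤ G i j)
    (hafm : {i | 0 < hG.eigenvalues i}.Subsingleton) (hnbr : ∀ v, ∃ w, H.Adj v w)
    {φ : V → Fin n} (hφ : IsAdmissible H G φ) {i j : Fin n} (hi : colourCount φ i ≠ 0)
    (hj : IsActive G j)
    (hgood : G j j ≠ 0 ∨ G i j = 0 ∨ ∀ k, colourCount φ k ≠ 0 → G j k ≠ 0) :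
    colourCount φ - Finsupp.single i 1 + Finsupp.single j 1 ∈
      colourCount '' {φ | IsAdmissible H G φ} := by
  classical
  obtain ⟨u, rfl⟩ := colourCount_apply_ne_zero_iff.1 hi
  have hact : ∀ w, IsActive G (φ w) := fun w =>
    isActive_of_colourCount_ne_zero hφ hnbr (colourCount_apply_ne_zero_iff.2 ⟨w, rfl⟩)
  refine ⟨_, isAdmissible_update hG hφ fun w huw => ?_, colourCount_update φ u j⟩
  rcases hgood with hjj | hij | hall
  · exact apply_ne_zero_of_apply_self_ne_zero hG hnn hafm hjj (hact w)
  · exact fun hjw => hφ u w huw (apply_eq_zero_trans hG hnn hafm (hact u) hj hij hjw)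
  · exact hall _ (colourCount_apply_ne_zero_iff.2 ⟨w, rfl⟩)

end Recolouring

section Exchange

variable {V : Type*} [Fintype V] {n : ℕ} {H : SimpleGraph V} {G : Matrix (Fin n) (Fin n) ℝ}
  {a : Fin n →₀ ℕ} {ι : Type*} [Fintype ι]

lemma sum_keyPart_equiv (e : ι ≃ colourKeys G a) (c : Fin n →₀ ℕ) :
    ∑ x, keyPart c (e x) = ∑ κ ∈ colourKeys G a, keyPart c κ := by
  rw [e.sum_comp (fun κ => keyPart c κ), sum_coe_sort]

lemma exists_proper_keyPart [DecidableEq ι] (hG : G.IsHermitian) (hnn : ∀ i j, 0 ≤ G i j)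
    (hafm : {i | 0 < hG.eigenvalues i}.Subsingleton) (e : ι ≃ colourKeys G a) {φ : V → Fin n}
    (hφ : IsAdmissible H G φ)
    (hsum : ∑ κ ∈ colourKeys G a, keyPart (colourCount φ) κ = colourCount φ) :
    ∃ ψ : V → ι, (∀ u v, H.Adj u v → ψ u ≠ ψ v) ∧
      ∀ x, colourCount ψ x = (keyPart (colourCount φ) (e x)).degree :=
  exists_proper_of_sum_eq_colourCount hφ _ (by rw [sum_keyPart_equiv, hsum])
    fun x => degree_keyPart_le_one_or hG hnn hafm (e x).2 _

lemma degree_tsub_add {σ : Type*} {f g h : σ →₀ ℕ} (hg : g ≤ f) :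
    (f - g + h).degree = f.degree - g.degree + h.degree := by
  have := congrArg Finsupp.degree (tsub_add_cancel_of_le hg)
  rw [map_add] at this
  rw [map_add]
  omega

/-- Decoding a proper `ι`-colouring whose counts are those of `a`, read through the keys, after
moving one unit from the key `xi` to the key `xj`. -/
lemma sub_add_single_mem_of_proper [DecidableEq ι] (hG : G.IsHermitian) (hnn : ∀ i j, 0 ≤ G i j)
    (hafm : {i | 0 < hG.eigenvalues i}.Subsingleton) (e : ι ≃ colourKeys G a)
    (hsum : ∑ x, keyPart a (e x) = a) {ψa ψ : V → ι}
    (hψa : ∀ x, colourCount ψa x = (keyPart a (e x)).degree) (hψ : ∀ u v, H.Adj u v → ψ u ≠ ψ v)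
    {xi xj : ι} (hcount : colourCount ψ =
      colourCount ψa - Finsupp.single xi 1 + Finsupp.single xj 1)
    {i j : Fin n} (hi : i ∈ (keyPart a (e xi)).support) (hj : j ∈ keyColours (e xj).1) :
    a - Finsupp.single i 1 + Finsupp.single j 1 ∈ colourCount '' {φ | IsAdmissible H G φ} := by
  set d : ι → Fin n →₀ ℕ := fun x => keyPart a (e x) -
    (if x = xi then Finsupp.single i 1 else 0) + (if x = xj then Finsupp.single j 1 else 0)
  have hle : ∀ x, (if x = xi then Finsupp.single i 1 else 0) ≤ keyPart a (e x) := fun x => by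
    split_ifs with h
    · subst h
      exact Finsupp.single_le_iff.2 (Nat.one_le_iff_ne_zero.2 (Finsupp.mem_support_iff.1 hi))
    · exact zero_le
  have hsupp : ∀ x, (d x).support ⊆ keyColours (e x).1 := fun x => by
    refine Finsupp.support_add.trans (union_subset
      (Finsupp.support_tsub.trans (support_keyPart_subset _ _)) ?_)
    split_ifs with h
    · subst h
      simpa using hj
    · simp
  have hdsum : ∑ x, d x = a - Finsupp.single i 1 + Finsupp.single j 1 := by
    rw [sum_add_distrib, sum_tsub_distrib _ fun x _ => hle x, hsum]
    simp
  rw [← hdsum]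
  refine sum_mem_image_admissible hψ d (fun x => ?_) fun x y hxy k hk l hl =>
    apply_ne_zero_of_mem_keyColours hG hnn hafm (e x).2 (e y).2
      (fun h => hxy (e.injective (Subtype.ext h))) (hsupp x hk) (hsupp y hl)
  rw [hcount, degree_tsub_add (hle x), Finsupp.add_apply, Finsupp.tsub_apply, hψa]
  simp only [Finsupp.single_apply, apply_ite Finsupp.degree, Finsupp.degree_single, map_zero,
    eq_comm (a := xi), eq_comm (a := xj)]

lemma exists_mem_colourKeys_degree_keyPart_lt {b : Fin n →₀ ℕ} {i : Fin n} (hi : b i < a i)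
    (hact : IsActive G i) (hclass : ∀ k, G i k = 0 → b k ≤ a k) :
    ∃ κ ∈ colourKeys G a, i ∈ (keyPart a κ).support ∧
      (keyPart b κ).degree < (keyPart a κ).degree := by
  by_cases hii : G i i = 0
  · refine ⟨.inl (colourClass G i), inl_mem_colourKeys.2 ⟨i, by omega, hact, hii, rfl⟩, ?_, ?_⟩
    · simp [keyPart, mem_colourClass, hact, hii]
      omega
    · rw [degree_keyPart_inl, degree_keyPart_inl]
      exact sum_lt_sum (fun k hk => hclass k (mem_colourClass.1 hk).2)
        ⟨i, mem_colourClass.2 ⟨hact, hii⟩, hi⟩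
  · have hlt : a i - 1 < a i := by omega
    refine ⟨.inr ⟨i, a i - 1⟩, inr_mem_colourKeys.2 ⟨hii, hlt⟩, ?_, ?_⟩
    · simp [keyPart, hlt]
    · simp [keyPart, hlt, show ¬a i - 1 < b i by omega]

theorem exists_exchange_of_colourKeys (hG : G.IsHermitian) (hnn : ∀ i j, 0 ≤ G i j)
    (hafm : {i | 0 < hG.eigenvalues i}.Subsingleton) (hnbr : ∀ v, ∃ w, H.Adj v w) {q : ℕ}
    (hq : MConvex (properCounts H (Fin q))) (hVq : Fintype.card V ≤ q) {φa φb : V → Fin n}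
    (ha : IsAdmissible H G φa) (hb : IsAdmissible H G φb) {i : Fin n}
    (hi : colourCount φb i < colourCount φa i)
    (hhard : ∀ j, colourCount φa j < colourCount φb j →
      G j j = 0 ∧ G i j ≠ 0 ∧ ∃ k, colourCount φa k ≠ 0 ∧ G j k = 0) :
    ∃ j, colourCount φa j < colourCount φb j ∧ colourCount φa - Finsupp.single i 1 +
      Finsupp.single j 1 ∈ colourCount '' {φ | IsAdmissible H G φ} := by
  set a := colourCount φa
  set b := colourCount φb
  have hactA : ∀ k, a k ≠ 0 → IsActive G k := fun k => isActive_of_colourCount_ne_zero ha hnbr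
  have hactB : ∀ k, b k ≠ 0 → IsActive G k := fun k => isActive_of_colourCount_ne_zero hb hnbr
  have hclassA : ∀ k, a k ≠ 0 → G k k = 0 → .inl (colourClass G k) ∈ colourKeys G a :=
    fun k hk hkk => inl_mem_colourKeys.2 ⟨k, hk, hactA k hk, hkk, rfl⟩
  have hclassB : ∀ k, b k ≠ 0 → G k k = 0 → .inl (colourClass G k) ∈ colourKeys G a := by
    intro k hk hkk
    by_cases hak : a k = 0
    · obtain ⟨-, -, k', hk', hkk'⟩ := hhard k (by omega)
      have hk'k : G k' k = 0 := by rwa [(isHermitian_iff_isSymm.1 hG).apply]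
      have hk'k' : G k' k' = 0 := by_contra fun h =>
        apply_ne_zero_of_apply_self_ne_zero hG hnn hafm h (hactB k hk) hk'k
      rw [colourClass_eq_of_apply_eq_zero hG hnn hafm (hactB k hk) (hactA k' hk') hkk']
      exact hclassA k' hk' hk'k'
    · exact hclassA k hak hkk
  have hsumA := sum_keyPart hG hnn hafm hactA hclassA fun _ _ => le_rfl
  have hsumB := sum_keyPart hG hnn hafm hactB hclassB fun ℓ hℓ =>
    not_lt.1 fun h => hℓ (hhard ℓ h).1
  set e := (colourKeys G a).equivFin.symm
  obtain ⟨ψa, hψa, hya⟩ := exists_proper_keyPart hG hnn hafm e ha hsumA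
  obtain ⟨ψb, hψb, hyb⟩ := exists_proper_keyPart hG hnn hafm e hb hsumB
  obtain ⟨κi, hκi, hiκ, hκi_lt⟩ := exists_mem_colourKeys_degree_keyPart_lt hi
    (hactA i (by omega)) fun k hk => not_lt.1 fun h => (hhard k h).2.1 hk
  have hm := hq.properCounts_of_le
    ((card_colourKeys_le (G := G) a).trans ((degree_colourCount φa).trans_le hVq))
  obtain ⟨xj, hlt, ψ, hψ, hcount⟩ :=
    hm _ ⟨ψa, hψa, rfl⟩ _ ⟨ψb, hψb, rfl⟩ (e.symm ⟨κi, hκi⟩) (by simpa [hya, hyb] using hκi_lt)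
  rw [hya, hyb] at hlt
  obtain ⟨j, hj, hjlt⟩ := exists_lt_of_degree_keyPart_lt hlt
  exact ⟨j, hjlt, sub_add_single_mem_of_proper hG hnn hafm e
    ((sum_keyPart_equiv e a).trans hsumA) hya hψ hcount (by simpa using hiκ) hj⟩

end Exchange

/-- Let `H` be a connected graph on `t ≥ 2` vertices. If the support of
`h_H(−; K_q)` is M-convex for some `q ≥ t`, then the support of `h_H(−; G)` is M-convex
for every antiferromagnetic weighted graph `G`. -/
theorem stmt5 {t : ℕ} (ht : 2 ≤ t) {V : Type} [Fintype V] (hcard : Fintype.card V = t)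
    (H : SimpleGraph V) (hconn : H.Connected)
    (q : ℕ) (hq : t ≤ q)
    (hKq : MConvex ((chromPoly H (adjKq q) (adjKq_isHermitian q)).support : Set (Fin q →₀ ℕ)))
    {n : ℕ} (G : Matrix (Fin n) (Fin n) ℝ) (hG : G.IsHermitian)
    (hnn : ∀ i j, 0 ≤ G i j)
    (hafm : {i | 0 < hG.eigenvalues i}.Subsingleton) :
    MConvex ((chromPoly H G hG).support : Set (Fin n →₀ ℕ)) := by
  have : Nontrivial V := Fintype.one_lt_card_iff_nontrivial.1 (by omega)
  have hnbr := hconn.preconnected.exists_adj_of_nontrivial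
  rw [coe_support_chromPoly_adjKq] at hKq
  rw [coe_support_chromPoly H hG hnn]
  rintro _ ⟨φa, ha, rfl⟩ _ ⟨φb, hb, rfl⟩ i hi
  by_cases heasy : ∃ j, colourCount φa j < colourCount φb j ∧
      (G j j ≠ 0 ∨ G i j = 0 ∨ ∀ k, colourCount φa k ≠ 0 → G j k ≠ 0)
  · obtain ⟨j, hj, hgood⟩ := heasy
    exact ⟨j, hj, sub_add_single_mem_of_update hG hnn hafm hnbr ha (by omega)
      (isActive_of_colourCount_ne_zero hb hnbr (by omega)) hgood⟩
  · push Not at heasy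
    exact exists_exchange_of_colourKeys hG hnn hafm hnbr hKq (hcard ▸ hq) ha hb hi heasy
end

section
/- Let G be a finite simple graph, let F be a bipartite graph, and let 𝓗 be the class of all graphs that are cross-bipartite swapping in G. Then every 𝓗-blow-up H of F is bipartite swapping in G, i.e. hom(H, G)² ≤ hom(H × K_2, G). -/
open SimpleGraph

/-- The tensor product `H × K₂`. -/
def tensorK2 {V : Type} (H : SimpleGraph V) : SimpleGraph (V × Fin 2) where
  Adj x y := H.Adj x.1 y.1 ∧ x.2 ≠ y.2
  symm := ⟨fun _ _ h => ⟨h.1.symm, h.2.symm⟩⟩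
  loopless := ⟨fun _ h => h.2 rfl⟩

/-- The number of graph homomorphisms from `H` to `G`. -/
noncomputable def homCount {V W : Type} (H : SimpleGraph V) (G : SimpleGraph W) : ℕ :=
  Nat.card (H →g G)

/-- `hom_b(H × K₂, G[A,B])`: the number of homomorphisms from `H × K₂` to `G` mapping the
side `V(H) × {1}` into `A` and the side `V(H) × {2}` into `B`. -/
noncomputable def homB {V W : Type} (H : SimpleGraph V) (G : SimpleGraph W)
    (A B : Set W) : ℕ :=
  Nat.card {f : tensorK2 H →g G // (∀ v : V, f (v, 0) ∈ A) ∧ (∀ v : V, f (v, 1) ∈ B)}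

/-- `H` is cross-bipartite swapping in `G`:
`hom(H,G[A]) ⬝ hom(H,G[B]) ≤ hom_b(H × K₂, G[A,B])` for all `A, B ⊆ V(G)`. -/
def CrossBipartiteSwapping {V W : Type} (H : SimpleGraph V) (G : SimpleGraph W) : Prop :=
  ∀ A B : Set W,
    homCount H (G.induce A) * homCount H (G.induce B) ≤ homB H G A B

/-- `H` is a blow-up of `F` by graphs of the class described by `P`. -/
def IsBlowUpOf {V ι : Type} (H : SimpleGraph V) (F : SimpleGraph ι)
    (P : (α : Type) → SimpleGraph α → Prop) : Prop :=
  ∃ p : V → ι, Function.Surjective p ∧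
    (∀ u v : V, p u ≠ p v → (H.Adj u v ↔ F.Adj (p u) (p v))) ∧
    ∀ i : ι, P (p ⁻¹' {i}) (H.induce (p ⁻¹' {i}))

/-!
Let `p : V → ι` send each vertex of `H` to its part and fix a proper 2-colouring `c` of `F`.
For a set `S` of parts, `crossLayers H p S` consists of two copies of `H` on `V × Fin 2` in which
the edges inside the parts in `S` are redirected to join the two copies. For `S = ∅` this is
`H ⊔ H`, with `hom(H,G)²` homomorphisms to `G`; for `S = univ` the shift
`(v, a) ↦ (v, a + c (p v))` is an isomorphism onto `H × K₂`. Adding a part `i` to `S` does not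
decrease the count: once a homomorphism is fixed outside part `i`, layer `a` of `H_i` must land in
the common neighbourhood `A_a` of its outer neighbours, so the extensions number
`hom(H_i, G[A_0]) hom(H_i, G[A_1])` before and `hom_b(H_i × K₂, G[A_0, A_1])` after, and the
cross-bipartite swapping property of `H_i` compares them fibre by fibre.
-/

theorem Nat.card_le_card_of_card_fiber_le {X Y O : Type} [Finite X] [Finite Y] [Finite O]
    (f : X → O) (g : Y → O) (h : ∀ o, Nat.card {x // f x = o} ≤ Nat.card {y // g y = o}) :
    Nat.card X ≤ Nat.card Y := by
  have := Fintype.ofFinite O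
  rw [← Nat.card_congr (Equiv.sigmaFiberEquiv f), ← Nat.card_congr (Equiv.sigmaFiberEquiv g),
    Nat.card_sigma, Nat.card_sigma]
  exact Finset.sum_le_sum fun o _ => h o

theorem homCount_congr {V V' W : Type} {H : SimpleGraph V} {H' : SimpleGraph V'}
    (e : H ≃g H') (G : SimpleGraph W) : homCount H G = homCount H' G :=
  Nat.card_congr (e.homCongr .refl)

namespace SimpleGraph

variable {V ι W : Type}

def crossLayers (H : SimpleGraph V) (p : V → ι) (S : Set ι) : SimpleGraph (V × Fin 2) where
  Adj x y := H.Adj x.1 y.1 ∧ (x.2 ≠ y.2 ↔ p x.1 = p y.1 ∧ p x.1 ∈ S)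
  symm := ⟨fun _ _ ⟨h, hS⟩ => ⟨h.symm, by grind⟩⟩
  loopless := ⟨fun _ h => h.1.ne rfl⟩

variable {H : SimpleGraph V} {p : V → ι} {S : Set ι} {x y : V × Fin 2}

theorem crossLayers_adj_of_ne (h : p x.1 ≠ p y.1) :
    (crossLayers H p S).Adj x y ↔ H.Adj x.1 y.1 ∧ x.2 = y.2 := by
  simp [crossLayers, h]

theorem crossLayers_adj_of_eq (h : p x.1 = p y.1) :
    (crossLayers H p S).Adj x y ↔ H.Adj x.1 y.1 ∧ (x.2 ≠ y.2 ↔ p x.1 ∈ S) := by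
  simp [crossLayers, h]

theorem crossLayers_empty_adj :
    (crossLayers H p ∅).Adj x y ↔ H.Adj x.1 y.1 ∧ x.2 = y.2 := by
  simp [crossLayers]

theorem homCount_sq_eq_homCount_crossLayers_empty (H : SimpleGraph V) (p : V → ι)
    (G : SimpleGraph W) : homCount H G ^ 2 = homCount (crossLayers H p ∅) G :=
  calc homCount H G ^ 2 = Nat.card (Fin 2 → (H →g G)) := by
        rw [Nat.card_fun, Nat.card_fin, homCount]
    _ = homCount (crossLayers H p ∅) G := Nat.card_congr
      { toFun φ := ⟨fun x => φ x.2 x.1, fun h => by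
          obtain ⟨h, hxy⟩ := crossLayers_empty_adj.mp h
          exact hxy ▸ (φ _).map_adj h⟩
        invFun χ a :=
          ⟨fun v => χ (v, a), fun h => χ.map_adj (crossLayers_empty_adj.mpr ⟨h, rfl⟩)⟩
        left_inv _ := rfl
        right_inv _ := rfl }

def crossLayersUnivIso (c : ι → Fin 2)
    (hc : ∀ u v, H.Adj u v → p u ≠ p v → c (p u) ≠ c (p v)) :
    crossLayers H p Set.univ ≃g tensorK2 H where
  toEquiv := .prodShear (.refl V) fun v => Equiv.addRight (c (p v))
  map_rel_iff' {x y} := by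
    obtain ⟨u, a⟩ := x
    obtain ⟨v, b⟩ := y
    have shift_ne_iff : ∀ a b c d : Fin 2, c ≠ d → (a + c ≠ b + d ↔ a = b) := by decide
    by_cases hp : p u = p v
    · simp [crossLayers, tensorK2, hp]
    · simp only [crossLayers, tensorK2, Equiv.prodShear_apply, Equiv.refl_apply, hp,
        false_and, iff_false, not_not]
      exact and_congr_right fun h => shift_ne_iff _ _ _ _ (hc u v h hp)

section PartSwap

variable {F : SimpleGraph ι} {G : SimpleGraph W} {i : ι}

def restrictOuter (p : V → ι) (i : ι) {L : SimpleGraph (V × Fin 2)} (χ : L →g G) :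
    {x : V × Fin 2 // p x.1 ≠ i} → W :=
  fun x => χ x

def layerNbhd (F : SimpleGraph ι) (G : SimpleGraph W) (p : V → ι) (i : ι)
    (o : {x : V × Fin 2 // p x.1 ≠ i} → W) (a : Fin 2) : Set W :=
  {w | ∀ x : {x : V × Fin 2 // p x.1 ≠ i}, x.1.2 = a → F.Adj i (p x.1.1) → G.Adj w (o x)}

theorem crossLayers_insert_adj_iff (hx : p x.1 ≠ i) :
    (crossLayers H p (insert i S)).Adj x y ↔ (crossLayers H p S).Adj x y := by
  simp [crossLayers, hx]

theorem card_fiber_restrictOuter_le (hi : i ∉ S)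
    (hadj : ∀ u v, p u ≠ p v → (H.Adj u v ↔ F.Adj (p u) (p v)))
    (o : {x : V × Fin 2 // p x.1 ≠ i} → W) [Finite V] [Finite W] :
    Nat.card {χ : crossLayers H p S →g G // restrictOuter p i χ = o} ≤
      ∏ a, homCount (H.induce (p ⁻¹' {i})) (G.induce (layerNbhd F G p i o a)) := by
  simp only [homCount, ← Nat.card_pi]
  refine Nat.card_le_card_of_injective
    (fun χ a => ⟨fun u => ⟨χ.1 (u.1, a), fun x hxa hF => ?_⟩, fun {u u'} h => ?_⟩) ?_
  · have hu : p u.1 = i := u.2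
    have hne : p u.1 ≠ p x.1.1 := fun h => x.2 (h ▸ hu)
    have hadj' : (crossLayers H p S).Adj (u.1, a) x.1 :=
      (crossLayers_adj_of_ne hne).mpr ⟨(hadj _ _ hne).mpr (by rwa [hu]), hxa.symm⟩
    exact congrFun χ.2 x ▸ χ.1.map_adj hadj'
  · have hu : p u.1 = i := u.2
    have hpe : p u.1 = p u'.1 := hu.trans u'.2.symm
    exact χ.1.map_adj <| (crossLayers_adj_of_eq hpe).mpr ⟨h, by simp [hu, hi]⟩
  · intro χ₁ χ₂ h
    ext x
    by_cases hx : p x.1 = i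
    · exact congrArg Subtype.val (DFunLike.congr_fun (congrFun h x.2) ⟨x.1, hx⟩)
    · exact congrFun (χ₁.2.trans χ₂.2.symm) ⟨x, hx⟩

def extendAtPart [DecidableEq ι]
    (hadj : ∀ u v, p u ≠ p v → (H.Adj u v ↔ F.Adj (p u) (p v)))
    (χ₀ : crossLayers H p S →g G) (ψ : tensorK2 (H.induce (p ⁻¹' {i})) →g G)
    (hψ : ∀ x, ψ x ∈ layerNbhd F G p i (restrictOuter p i χ₀) x.2) :
    crossLayers H p (insert i S) →g G where
  toFun x := if h : p x.1 = i then ψ (⟨x.1, h⟩, x.2) else χ₀ x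
  map_rel' {x y} hxy := by
    have across {x y : V × Fin 2} (hx : p x.1 = i) (hy : p y.1 ≠ i)
        (hxy : (crossLayers H p (insert i S)).Adj x y) :
        G.Adj (ψ (⟨x.1, hx⟩, x.2)) (χ₀ y) := by
      have hne : p x.1 ≠ p y.1 := hx ▸ Ne.symm hy
      obtain ⟨h, hlayer⟩ := (crossLayers_adj_of_ne hne).mp hxy
      exact hψ _ ⟨y, hy⟩ hlayer.symm (hx ▸ (hadj _ _ hne).mp h)
    by_cases hx : p x.1 = i <;> by_cases hy : p y.1 = i <;>
      simp only [hx, hy, dite_true, dite_false]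
    · obtain ⟨h, hS⟩ := (crossLayers_adj_of_eq (hx.trans hy.symm)).mp hxy
      exact ψ.map_adj ⟨h, hS.mpr (hx ▸ Set.mem_insert i S)⟩
    · exact across hx hy hxy
    · exact (across hy hx hxy.symm).symm
    · exact χ₀.map_adj ((crossLayers_insert_adj_iff hx).mp hxy)

theorem homB_le_card_fiber_restrictOuter
    (hadj : ∀ u v, p u ≠ p v → (H.Adj u v ↔ F.Adj (p u) (p v)))
    (χ₀ : crossLayers H p S →g G) [Finite V] [Finite W] :
    homB (H.induce (p ⁻¹' {i})) G (layerNbhd F G p i (restrictOuter p i χ₀) 0)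
        (layerNbhd F G p i (restrictOuter p i χ₀) 1) ≤
      Nat.card {χ : crossLayers H p (insert i S) →g G //
        restrictOuter p i χ = restrictOuter p i χ₀} := by
  classical
  refine Nat.card_le_card_of_injective (fun ψ => ⟨extendAtPart hadj χ₀ ψ.1 ?_, ?_⟩) ?_
  · rintro ⟨u, a⟩
    fin_cases a
    exacts [ψ.2.1 u, ψ.2.2 u]
  · funext x
    simp [restrictOuter, extendAtPart, x.2]
  · intro ψ₁ ψ₂ h
    ext ⟨u, a⟩
    have hu : p u.1 = i := u.2
    simpa [extendAtPart, hu] using DFunLike.congr_fun (congrArg Subtype.val h) (u.1, a)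

theorem homCount_crossLayers_le_insert [Finite V] [Finite W] (hi : i ∉ S)
    (hadj : ∀ u v, p u ≠ p v → (H.Adj u v ↔ F.Adj (p u) (p v)))
    (hswap : CrossBipartiteSwapping (H.induce (p ⁻¹' {i})) G) :
    homCount (crossLayers H p S) G ≤ homCount (crossLayers H p (insert i S)) G := by
  refine Nat.card_le_card_of_card_fiber_le (restrictOuter p i) (restrictOuter p i) fun o => ?_
  rcases isEmpty_or_nonempty {χ : crossLayers H p S →g G // restrictOuter p i χ = o} with
    _ | ⟨χ₀, rfl⟩
  · simp
  · calc _ ≤ ∏ a, homCount (H.induce (p ⁻¹' {i})) (G.induce (layerNbhd F G p i _ a)) :=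
          card_fiber_restrictOuter_le hi hadj _
      _ = homCount (H.induce (p ⁻¹' {i})) (G.induce (layerNbhd F G p i _ 0)) *
          homCount (H.induce (p ⁻¹' {i})) (G.induce (layerNbhd F G p i _ 1)) :=
          Fin.prod_univ_two _
      _ ≤ _ := hswap _ _
      _ ≤ _ := homB_le_card_fiber_restrictOuter hadj χ₀

theorem homCount_crossLayers_empty_le [Finite V] [Finite W]
    (hadj : ∀ u v, p u ≠ p v → (H.Adj u v ↔ F.Adj (p u) (p v)))
    (hswap : ∀ i, CrossBipartiteSwapping (H.induce (p ⁻¹' {i})) G) (hS : S.Finite) :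
    homCount (crossLayers H p ∅) G ≤ homCount (crossLayers H p S) G := by
  induction S, hS using Set.Finite.induction_on with
  | empty => exact le_rfl
  | insert hi _ ih => exact ih.trans (homCount_crossLayers_le_insert hi hadj (hswap _))

end PartSwap

end SimpleGraph

/-- If every part of the blow-up `H` of a bipartite graph `F` is
cross-bipartite swapping in `G`, then `H` is bipartite swapping in `G`:
`hom(H,G)² ≤ hom(H × K₂, G)`. -/
theorem stmt10 {V ι W : Type} [Fintype V] [Fintype W]
    (H : SimpleGraph V) (F : SimpleGraph ι) (G : SimpleGraph W)
    (hF : F.Colorable 2)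
    (hblow : IsBlowUpOf H F fun _ K => CrossBipartiteSwapping K G) :
    homCount H G ^ 2 ≤ homCount (tensorK2 H) G := by
  obtain ⟨p, hsurj, hadj, hswap⟩ := hblow
  obtain ⟨C⟩ := hF
  have : Finite ι := .of_surjective p hsurj
  calc homCount H G ^ 2 = homCount (crossLayers H p ∅) G :=
        homCount_sq_eq_homCount_crossLayers_empty H p G
    _ ≤ homCount (crossLayers H p Set.univ) G :=
        homCount_crossLayers_empty_le hadj hswap Set.finite_univ
    _ = homCount (tensorK2 H) G :=
        homCount_congr (crossLayersUnivIso C fun u v h hp => C.valid ((hadj u v hp).mp h)) G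
end

section
/- Let G be a finite simple graph and let F be a bipartite graph with vertices v_1,…,v_m. Let H be an 𝓗-blow-up of F obtained by replacing each v_i by H_i, where every H_i is cross-bipartite swapping in G. Then for every U ⊆ V(F) and every u ∈ V(F) \ U, hom(H^U, G) ≤ hom(H^{U ∪ {u}}, G). -/
open SimpleGraph

/-- The graph `H^U` built from two disjoint copies of the blow-up `H` of `F`
(with blow-up projection `p : V(H) → V(F)`), where for every `j ∈ U` the two copies
`H_j ⊔ H_j` of the part above `j` are replaced by `H_j × K₂`; all complete-bipartite
connections coming from edges of `F` are kept within each copy. -/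
def swapped {V ι : Type} (H : SimpleGraph V) (F : SimpleGraph ι) (p : V → ι)
    (U : Set ι) : SimpleGraph (V × Fin 2) where
  Adj x y :=
    (p x.1 ≠ p y.1 ∧ F.Adj (p x.1) (p y.1) ∧ x.2 = y.2) ∨
    (p x.1 = p y.1 ∧ H.Adj x.1 y.1 ∧
      ((p x.1 ∈ U ∧ x.2 ≠ y.2) ∨ (p x.1 ∉ U ∧ x.2 = y.2)))
  symm := by
    constructor
    rintro x y (⟨h1, h2, h3⟩ | ⟨h1, h2, h3⟩)
    · exact Or.inl ⟨Ne.symm h1, h2.symm, h3.symm⟩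
    · refine Or.inr ⟨h1.symm, h2.symm, ?_⟩
      rcases h3 with ⟨hu, hne⟩ | ⟨hu, heq⟩
      · exact Or.inl ⟨h1 ▸ hu, hne.symm⟩
      · exact Or.inr ⟨h1 ▸ hu, heq.symm⟩
  loopless := by
    constructor
    rintro x (⟨h1, -, -⟩ | ⟨-, h2, -⟩)
    · exact h1 rfl
    · exact H.loopless.irrefl _ h2

/-!
Count homomorphisms `H^Q → G` by first fixing their values `g` off the two copies of the fibre
over `u`. Adjacency between that fibre and the rest of `H^Q` depends only on `F` and on the copy,
so the extensions of `g` are exactly the maps of the fibre that send copy `i` into the common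
neighbourhood `A_i = sideNbhd F G g i` of the already placed copy-`i` neighbours and are
homomorphisms on the fibre.
For `u ∉ Q` the fibre spans two disjoint copies of `H_u`, giving
`hom(H_u, G[A_0]) * hom(H_u, G[A_1])` extensions; for `u ∈ Q` it spans `H_u × K₂`, giving
`hom_b(H_u × K₂, G[A_0, A_1])` of them. Cross-bipartite swapping compares the two for each `g`.
-/

theorem Nat.card_subtype_prod_le_of_forall {α β : Type*} [Finite α] [Finite β]
    {R R' : α → β → Prop} (h : ∀ a, Nat.card {b // R a b} ≤ Nat.card {b // R' a b}) :
    Nat.card {x : α × β // R x.1 x.2} ≤ Nat.card {x : α × β // R' x.1 x.2} := by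
  have := Fintype.ofFinite α
  rw [Nat.card_congr (Equiv.subtypeProdEquivSigmaSubtype R),
    Nat.card_congr (Equiv.subtypeProdEquivSigmaSubtype R'), Nat.card_sigma, Nat.card_sigma]
  exact Finset.sum_le_sum fun a _ => h a

namespace SimpleGraph

variable {α V ι W : Type}

def IsHomFun (K : SimpleGraph α) (G : SimpleGraph W) (φ : α → W) : Prop :=
  ∀ ⦃x y⦄, K.Adj x y → G.Adj (φ x) (φ y)

def homEquivIsHomFun (K : SimpleGraph α) (G : SimpleGraph W) :
    (K →g G) ≃ {φ : α → W // IsHomFun K G φ} where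
  toFun f := ⟨f, fun _ _ => f.map_adj⟩
  invFun φ := ⟨φ.1, fun h => φ.2 h⟩

variable {H : SimpleGraph V} {F : SimpleGraph ι} {G : SimpleGraph W} {p : V → ι}
  {Q : Set ι} {x y : V × Fin 2}

theorem swapped_adj_of_ne (hxy : p x.1 ≠ p y.1) :
    (swapped H F p Q).Adj x y ↔ F.Adj (p x.1) (p y.1) ∧ x.2 = y.2 := by
  simp [swapped, hxy]

theorem swapped_adj_of_eq (hxy : p x.1 = p y.1) :
    (swapped H F p Q).Adj x y ↔
      H.Adj x.1 y.1 ∧ (p x.1 ∈ Q ∧ x.2 ≠ y.2 ∨ p x.1 ∉ Q ∧ x.2 = y.2) := by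
  simp [swapped, hxy]

theorem swapped_insert_adj_iff {u : ι} (hx : p x.1 ≠ u) :
    (swapped H F p (insert u Q)).Adj x y ↔ (swapped H F p Q).Adj x y := by
  simp [swapped, hx]

section Fibre

variable (p) (u : ι)

abbrev OffFibre : Type := {x : V × Fin 2 // p x.1 ≠ u}

abbrev OnFibre : Type := p ⁻¹' {u} × Fin 2

variable (F G) {p u} in
def sideNbhd (g : OffFibre p u → W) (i : Fin 2) : Set W :=
  {w | ∀ k : OffFibre p u, F.Adj u (p k.1.1) → k.1.2 = i → G.Adj w (g k)}

variable [DecidableEq ι]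

def glueFibre (g : OffFibre p u → W) (h : OnFibre p u → W) : V × Fin 2 → W :=
  fun x => if hx : p x.1 = u then h (⟨x.1, hx⟩, x.2) else g ⟨x, hx⟩

variable {p u}

@[simp]
theorem glueFibre_off (g : OffFibre p u → W) (h : OnFibre p u → W) (k : OffFibre p u) :
    glueFibre p u g h k = g k :=
  dif_neg k.2

@[simp]
theorem glueFibre_on (g : OffFibre p u → W) (h : OnFibre p u → W) (z : OnFibre p u) :
    glueFibre p u g h (z.1.1, z.2) = h z :=
  dif_pos z.1.2

variable (p u W) in
def splitFibre : (V × Fin 2 → W) ≃ (OffFibre p u → W) × (OnFibre p u → W) where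
  toFun φ := (fun k => φ k, fun z => φ (z.1.1, z.2))
  invFun gh := glueFibre p u gh.1 gh.2
  left_inv φ := by
    funext x
    by_cases hx : p x.1 = u <;> simp [glueFibre, hx]
  right_inv gh := by
    ext <;> simp

theorem isHomFun_glueFibre_iff {g : OffFibre p u → W} {h : OnFibre p u → W} :
    IsHomFun (swapped H F p Q) G (glueFibre p u g h) ↔
      IsHomFun ((swapped H F p Q).comap Subtype.val) G g ∧
      IsHomFun ((swapped H F p Q).comap fun z : OnFibre p u => (z.1.1, z.2)) G h ∧
      ∀ z, h z ∈ sideNbhd F G g z.2 := by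
  have adj_off {z : OnFibre p u} {k : OffFibre p u} :
      (swapped H F p Q).Adj (z.1.1, z.2) k ↔ F.Adj u (p k.1.1) ∧ z.2 = k.1.2 := by
    have hz : p z.1.1 = u := z.1.2
    rw [swapped_adj_of_ne (by rw [hz]; exact k.2.symm), hz]
  constructor
  · intro hφ
    refine ⟨fun k k' hkk' => by simpa using hφ hkk', fun z z' hzz' => by simpa using hφ hzz',
      fun z k hk hi => ?_⟩
    simpa using hφ (adj_off.2 ⟨hk, hi.symm⟩)
  · rintro ⟨hoff, hon, hside⟩ x y hxy
    have mixed (z : OnFibre p u) (k : OffFibre p u) (hzk : (swapped H F p Q).Adj (z.1.1, z.2) k) :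
        G.Adj (h z) (g k) :=
      hside z k (adj_off.1 hzk).1 (adj_off.1 hzk).2.symm
    dsimp only [glueFibre]
    by_cases hx : p x.1 = u <;> by_cases hy : p y.1 = u
    · rw [dif_pos hx, dif_pos hy]
      exact hon (x := (⟨x.1, hx⟩, x.2)) (y := (⟨y.1, hy⟩, y.2)) hxy
    · rw [dif_pos hx, dif_neg hy]
      exact mixed (⟨x.1, hx⟩, x.2) ⟨y, hy⟩ hxy
    · rw [dif_neg hx, dif_pos hy]
      exact (mixed (⟨y.1, hy⟩, y.2) ⟨x, hx⟩ hxy.symm).symm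
    · rw [dif_neg hx, dif_neg hy]
      exact hoff (x := ⟨x, hx⟩) (y := ⟨y, hy⟩) hxy

variable (p u) in
theorem homCount_eq_card_glueFibre (K : SimpleGraph (V × Fin 2)) :
    homCount K G =
      Nat.card {gh : (OffFibre p u → W) × (OnFibre p u → W) //
        IsHomFun K G (glueFibre p u gh.1 gh.2)} :=
  Nat.card_congr <| (homEquivIsHomFun K G).trans (splitFibre W p u).subtypeEquivOfSubtype'

theorem card_extensions_le_mul [Finite V] [Finite W] (hu : u ∉ Q) (g : OffFibre p u → W) :
    Nat.card {h : OnFibre p u → W // IsHomFun (swapped H F p Q) G (glueFibre p u g h)} ≤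
      homCount (H.induce (p ⁻¹' {u})) (G.induce (sideNbhd F G g 0)) *
        homCount (H.induce (p ⁻¹' {u})) (G.induce (sideNbhd F G g 1)) := by
  let side (i : Fin 2)
      (h : {h : OnFibre p u → W // IsHomFun (swapped H F p Q) G (glueFibre p u g h)}) :
      H.induce (p ⁻¹' {u}) →g G.induce (sideNbhd F G g i) :=
    { toFun v := ⟨h.1 (v, i), (isHomFun_glueFibre_iff.1 h.2).2.2 (v, i)⟩
      map_rel' {a b} hab := by
        have ha : p a.1 = u := a.2
        refine (isHomFun_glueFibre_iff.1 h.2).2.1 (x := (a, i)) (y := (b, i)) ?_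
        exact (swapped_adj_of_eq (ha.trans b.2.symm)).2 ⟨hab, Or.inr ⟨by rwa [ha], rfl⟩⟩ }
  rw [homCount, homCount, ← Nat.card_prod]
  refine Nat.card_le_card_of_injective (fun h => (side 0 h, side 1 h)) fun h h' hhh => ?_
  refine Subtype.ext (funext fun ⟨v, i⟩ => ?_)
  fin_cases i
  · exact congrArg (fun f => (f v : W)) (congrArg Prod.fst hhh)
  · exact congrArg (fun f => (f v : W)) (congrArg Prod.snd hhh)

theorem homB_le_card_extensions [Finite V] [Finite W] (hu : u ∈ Q) {g : OffFibre p u → W}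
    (hg : IsHomFun ((swapped H F p Q).comap Subtype.val) G g) :
    homB (H.induce (p ⁻¹' {u})) G (sideNbhd F G g 0) (sideNbhd F G g 1) ≤
      Nat.card {h : OnFibre p u → W // IsHomFun (swapped H F p Q) G (glueFibre p u g h)} := by
  refine Nat.card_le_card_of_injective (fun f => ⟨f.1, isHomFun_glueFibre_iff.2 ⟨hg, ?_, ?_⟩⟩)
    fun f f' hff' => Subtype.ext (DFunLike.coe_injective (congrArg Subtype.val hff'))
  · intro z z' hzz'
    have hz : p z.1.1 = u := z.1.2
    obtain ⟨hH, ⟨-, hi⟩ | ⟨hQ, -⟩⟩ := (swapped_adj_of_eq (hz.trans z'.1.2.symm)).1 hzz'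
    · exact f.1.map_adj ⟨hH, hi⟩
    · exact absurd (by rwa [hz]) hQ
  · rintro ⟨v, i⟩
    fin_cases i
    · exact f.2.1 v
    · exact f.2.2 v

theorem card_extensions_le_card_extensions_insert [Finite V] [Finite W] (hu : u ∉ Q)
    (hswap : CrossBipartiteSwapping (H.induce (p ⁻¹' {u})) G) (g : OffFibre p u → W) :
    Nat.card {h : OnFibre p u → W // IsHomFun (swapped H F p Q) G (glueFibre p u g h)} ≤
      Nat.card {h : OnFibre p u → W //
        IsHomFun (swapped H F p (insert u Q)) G (glueFibre p u g h)} := by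
  by_cases hg : IsHomFun ((swapped H F p Q).comap Subtype.val) G g
  · have hg' : IsHomFun ((swapped H F p (insert u Q)).comap Subtype.val) G g :=
      fun k _ hkk' => hg ((swapped_insert_adj_iff k.2).1 hkk')
    calc _ ≤ _ := card_extensions_le_mul hu g
      _ ≤ _ := hswap _ _
      _ ≤ _ := homB_le_card_extensions (Set.mem_insert u Q) hg'
  · have : IsEmpty {h : OnFibre p u → W // IsHomFun (swapped H F p Q) G (glueFibre p u g h)} :=
      ⟨fun h => hg (isHomFun_glueFibre_iff.1 h.2).1⟩
    simp

end Fibre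

end SimpleGraph

theorem stmt11_general {V ι W : Type} [Fintype V] [Fintype W]
    (H : SimpleGraph V) (F : SimpleGraph ι) (G : SimpleGraph W)
    (p : V → ι)
    (hfib : ∀ i : ι, CrossBipartiteSwapping (H.induce (p ⁻¹' {i})) G)
    (U : Set ι) (u : ι) (hu : u ∉ U) :
    homCount (swapped H F p U) G ≤ homCount (swapped H F p (insert u U)) G := by
  classical
  rw [homCount_eq_card_glueFibre p u, homCount_eq_card_glueFibre p u]
  exact Nat.card_subtype_prod_le_of_forall
    (card_extensions_le_card_extensions_insert hu (hfib u))

/-- Let `H` be a blow-up of a bipartite graph `F` (with projection `p`)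
whose parts are all cross-bipartite swapping in `G`. Then for every `U ⊆ V(F)` and every
`u ∉ U`, `hom(H^U, G) ≤ hom(H^{U ∪ {u}}, G)`. -/
theorem stmt11 {V ι W : Type} [Fintype V] [Fintype W]
    (H : SimpleGraph V) (F : SimpleGraph ι) (G : SimpleGraph W)
    (hF : F.Colorable 2)
    (p : V → ι) (hsurj : Function.Surjective p)
    (hcross : ∀ u v : V, p u ≠ p v → (H.Adj u v ↔ F.Adj (p u) (p v)))
    (hfib : ∀ i : ι, CrossBipartiteSwapping (H.induce (p ⁻¹' {i})) G)
    (U : Set ι) (u : ι) (hu : u ∉ U) :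
    homCount (swapped H F p U) G ≤ homCount (swapped H F p (insert u U)) G :=
  stmt11_general H F G p hfib U u hu
end

section
/- Let F be a bipartite graph and let 𝓗 be a nonempty class of graphs containing K_1. For every 𝓗-blow-up H of F, the graphs H × K_2 and H^{V(F)} are isomorphic. -/
open SimpleGraph

/-!
Fix a proper 2-colouring `c` of `F` and flip the `Fin 2`-coordinate of every vertex `(v, i)`
by `c (p v)`. Inside a part both endpoints are flipped alike, so the `H_j × K₂` edges are
preserved. Across an edge of `F` exactly one endpoint is flipped, which turns the crossing
edges of `H × K₂` into the edges kept within each copy.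
-/

theorem Fin.add_eq_add_iff_ne_of_ne {a b : Fin 2} (hab : a ≠ b) (i j : Fin 2) :
    i + a = j + b ↔ i ≠ j := by
  revert a b i j
  decide

theorem swapped_univ_adj {V ι : Type} {H : SimpleGraph V} {F : SimpleGraph ι} {p : V → ι}
    {x y : V × Fin 2} :
    (swapped H F p Set.univ).Adj x y ↔
      (p x.1 ≠ p y.1 ∧ F.Adj (p x.1) (p y.1) ∧ x.2 = y.2) ∨
        (p x.1 = p y.1 ∧ H.Adj x.1 y.1 ∧ x.2 ≠ y.2) := by
  simp [swapped]

def tensorK2IsoSwappedUniv {V ι : Type} {H : SimpleGraph V} {F : SimpleGraph ι}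
    (c : F.Coloring (Fin 2)) {p : V → ι}
    (hcross : ∀ u v : V, p u ≠ p v → (H.Adj u v ↔ F.Adj (p u) (p v))) :
    tensorK2 H ≃g swapped H F p Set.univ where
  toEquiv := Equiv.prodShear (Equiv.refl V) fun v => Equiv.addRight (c (p v))
  map_rel_iff' := by
    rintro ⟨u, i⟩ ⟨v, j⟩
    simp only [swapped_univ_adj, tensorK2, Equiv.prodShear_apply, Equiv.refl_apply,
      Equiv.coe_addRight]
    by_cases hp : p u = p v
    · simp [hp]
    · by_cases hF : F.Adj (p u) (p v)
      · simp [hp, hF, hcross u v hp, Fin.add_eq_add_iff_ne_of_ne (c.valid hF)]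
      · simp [hp, hF, hcross u v hp]

theorem stmt12_general {V ι : Type} (H : SimpleGraph V) (F : SimpleGraph ι)
    (hF : F.Colorable 2)
    (p : V → ι)
    (hcross : ∀ u v : V, p u ≠ p v → (H.Adj u v ↔ F.Adj (p u) (p v))) :
    Nonempty (tensorK2 H ≃g swapped H F p Set.univ) :=
  let ⟨c⟩ := hF
  ⟨tensorK2IsoSwappedUniv c hcross⟩

/-- For a blow-up `H` of a bipartite graph `F` (with projection `p`),
the graphs `H × K₂` and `H^{V(F)}` are isomorphic. -/
theorem stmt12 {V ι : Type} [Fintype V] (H : SimpleGraph V) (F : SimpleGraph ι)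
    (hF : F.Colorable 2)
    (p : V → ι) (hsurj : Function.Surjective p)
    (hcross : ∀ u v : V, p u ≠ p v → (H.Adj u v ↔ F.Adj (p u) (p v))) :
    Nonempty (tensorK2 H ≃g swapped H F p Set.univ) :=
  stmt12_general H F hF p hcross
end

section
/- For every q ≥ 2 and every d ≥ 1, every path (in particular the paths of odd length 2d−1 and of even length 2d) is cross-bipartite swapping in the complete graph K_q: for all A, B ⊆ V(K_q), hom(P, K_q[A]) · hom(P, K_q[B]) ≤ hom_b(P × K_2, K_q[A,B]), where P is the path. -/
open SimpleGraph

/-!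
For a path `P` on `n + 1` vertices, `hom(P, K_q[A]) = a (a - 1) ^ n` with `a = |A|`: each vertex
after the first avoids only its predecessor. A bipartite `H` makes `H × K₂` two disjoint copies
of `H`, so `hom_b(P × K₂, K_q[A,B])` is the product of the numbers of walks alternating
`A, B, A, …` and `B, A, B, …`. Prepending a vertex of `A` to a walk that starts in `B` leaves at
least `a - 1` choices, so the product of the two alternating counts grows at least by the factor
`(a - 1) (b - 1)` per step, which is exactly the growth of `hom(P, K_q[A]) hom(P, K_q[B])`.
-/

open Finset

namespace SimpleGraph

/-- The number of list homomorphisms `H → G` for the lists `L`. -/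
noncomputable def listHomCount {V W : Type} (H : SimpleGraph V) (G : SimpleGraph W)
    (L : V → Set W) : ℕ :=
  Nat.card {f : H →g G // ∀ v, f v ∈ L v}

section ListHom

variable {V W : Type} {H : SimpleGraph V} {G : SimpleGraph W}

theorem homCount_induce_eq_listHomCount (A : Set W) :
    homCount H (G.induce A) = listHomCount H G fun _ => A :=
  Nat.card_congr
    { toFun := fun φ => ⟨(Embedding.induce A).toHom.comp φ, fun v => (φ v).2⟩
      invFun := fun f => ⟨fun v => ⟨f.1 v, f.2 v⟩, f.1.map_rel⟩
      left_inv := fun _ => rfl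
      right_inv := fun _ => rfl }

/-- For a bipartite `H`, the graph `H × K₂` is two disjoint copies of `H`: the copy `d` consists
of the vertices `(v, χ v + d)`. -/
theorem homB_eq_mul_listHomCount (χ : H.Coloring (Fin 2)) (A B : Set W) :
    homB H G A B = listHomCount H G (fun v => if χ v = 0 then A else B) *
      listHomCount H G (fun v => if χ v = 0 then B else A) := by
  have fin_two_eq_add_one : ∀ {c d : Fin 2}, c ≠ d → c = d + 1 := by decide
  have fin_two_eq_iff : ∀ {c c' d d' : Fin 2}, c ≠ c' → d ≠ d' → (c = d ↔ c' = d') := by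
    decide
  rw [homB, listHomCount, listHomCount, ← Nat.card_prod]
  refine Nat.card_congr
    { toFun := fun F =>
        (⟨⟨fun v => F.1 (v, χ v), fun h => F.1.map_rel ⟨h, χ.valid h⟩⟩, fun v => ?_⟩,
         ⟨⟨fun v => F.1 (v, χ v + 1),
            fun h => F.1.map_rel ⟨h, by simpa using χ.valid h⟩⟩,
          fun v => ?_⟩)
      invFun := fun p => ⟨⟨fun x => if x.2 = χ x.1 then p.1.1 x.1 else p.2.1 x.1,
          fun {x y} h => ?_⟩, fun v => ?_, fun v => ?_⟩
      left_inv := fun F => ?_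
      right_inv := fun p => ?_ }
  · split_ifs with h
    · simpa [h] using F.2.1 v
    · simpa [Fin.eq_one_of_ne_zero _ h] using F.2.2 v
  · split_ifs with h
    · simpa [h] using F.2.2 v
    · simpa [Fin.eq_one_of_ne_zero _ h] using F.2.1 v
  · -- an edge of `H × K₂` changes both the side and the colour, so it stays in one copy
    have := fin_two_eq_iff h.2 (χ.valid h.1)
    split_ifs <;> first | exact p.1.1.map_rel h.1 | exact p.2.1.map_rel h.1 | tauto
  · rw [RelHom.coeFn_mk]
    split_ifs with h
    · simpa [← h] using p.1.2 v
    · simpa [Fin.eq_one_of_ne_zero _ (Ne.symm h)] using p.2.2 v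
  · rw [RelHom.coeFn_mk]
    split_ifs with h
    · simpa [← h] using p.1.2 v
    · simpa [show χ v = 0 by simp at h; omega] using p.2.2 v
  · refine Subtype.ext (DFunLike.ext _ _ fun ⟨v, c⟩ => ?_)
    simp only [RelHom.coeFn_mk]
    split_ifs with h
    · rw [h]
    · rw [fin_two_eq_add_one h]
  · refine Prod.ext (Subtype.ext (DFunLike.ext _ _ fun v => ?_))
      (Subtype.ext (DFunLike.ext _ _ fun v => ?_)) <;> simp

end ListHom

def pathGraph.parityColoring (n : ℕ) : (pathGraph n).Coloring (Fin 2) :=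
  Coloring.mk (fun u => ⟨u.val % 2, Nat.mod_lt _ two_pos⟩) <| by
    intro u v
    rw [pathGraph_adj]
    rintro (h | h) <;> simp only [ne_eq, Fin.ext_iff, ← h] <;> omega

theorem forall_pathGraph_adj_ne_iff {W : Type*} {n : ℕ} (f : Fin (n + 1) → W) :
    (∀ u v, (pathGraph (n + 1)).Adj u v → f u ≠ f v) ↔
      ∀ i : Fin n, f i.castSucc ≠ f i.succ := by
  refine ⟨fun h i => h _ _ (by simp [pathGraph_adj]), fun h u v huv => ?_⟩
  rcases pathGraph_adj.1 huv with e | e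
  · convert h ⟨u, by omega⟩ using 2 <;> ext <;> simp [e]
  · convert (h ⟨v, by omega⟩).symm using 2 <;> ext <;> simp [e]

theorem pathGraph.parityColoring_apply_eq_zero_iff {n : ℕ} (u : Fin n) :
    pathGraph.parityColoring n u = 0 ↔ u.val % 2 = 0 :=
  Fin.ext_iff

end SimpleGraph

section Alternate

variable {W : Type*}

def alternate (A B : Finset W) (i : ℕ) : Finset W := if i % 2 = 0 then A else B

@[simp]
theorem alternate_zero (A B : Finset W) : alternate A B 0 = A := rfl

theorem alternate_succ (A B : Finset W) : (fun i => alternate A B (i + 1)) = alternate B A := by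
  funext i
  simp only [alternate, Nat.succ_mod_two_eq_zero_iff]
  rcases Nat.mod_two_eq_zero_or_one i with h | h <;> simp [h]

end Alternate

section ProperWalks

variable {W : Type} [Fintype W] [DecidableEq W]

/-- Homomorphisms from the path `0, …, n` to the complete graph on `W`, written as vertex
sequences, whose `i`-th vertex lies in `s i`. -/
def properWalks (s : ℕ → Finset W) (n : ℕ) : Finset (Fin (n + 1) → W) :=
  {f | (∀ i : Fin (n + 1), f i ∈ s i) ∧ ∀ i : Fin n, f i.castSucc ≠ f i.succ}

theorem mem_properWalks {s : ℕ → Finset W} {n : ℕ} {f : Fin (n + 1) → W} :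
    f ∈ properWalks s n ↔
      (∀ i : Fin (n + 1), f i ∈ s i) ∧ ∀ i : Fin n, f i.castSucc ≠ f i.succ := by
  simp [properWalks]

theorem listHomCount_pathGraph_top (s : ℕ → Finset W) (n : ℕ) :
    listHomCount (pathGraph (n + 1)) ⊤ (fun i => (s i : Set W)) = #(properWalks s n) := by
  rw [listHomCount, ← Fintype.card_coe, ← Nat.card_eq_fintype_card]
  exact Nat.card_congr
    { toFun := fun f => ⟨f.1, mem_properWalks.2
        ⟨f.2, (forall_pathGraph_adj_ne_iff f.1).1 fun _ _ h => f.1.map_rel h⟩⟩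
      invFun := fun f => ⟨⟨f.1, fun h => (forall_pathGraph_adj_ne_iff f.1).2
        (mem_properWalks.1 f.2).2 _ _ h⟩, (mem_properWalks.1 f.2).1⟩
      left_inv := fun _ => rfl
      right_inv := fun _ => rfl }

theorem cons_mem_properWalks_succ_iff {s : ℕ → Finset W} {n : ℕ} {v : W}
    {g : Fin (n + 1) → W} :
    Fin.cons v g ∈ properWalks s (n + 1) ↔
      v ∈ s 0 ∧ v ≠ g 0 ∧ g ∈ properWalks (fun i => s (i + 1)) n := by
  simp only [mem_properWalks, Fin.forall_fin_succ (n := n + 1), Fin.forall_fin_succ (n := n),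
    Fin.cons_zero, Fin.cons_succ, Fin.val_zero, Fin.val_succ, Fin.castSucc_zero,
    ← Fin.succ_castSucc]
  tauto

theorem card_properWalks_zero (s : ℕ → Finset W) : #(properWalks s 0) = #(s 0) := by
  refine card_nbij' (fun f => f 0) (fun v _ => v) ?_ ?_ ?_ ?_
  all_goals intro x hx
  all_goals simp_all [mem_properWalks, funext_iff, Fin.fin_one_eq_zero]

theorem card_properWalks_succ (s : ℕ → Finset W) (n : ℕ) :
    #(properWalks s (n + 1)) =
      ∑ g ∈ properWalks (fun i => s (i + 1)) n, #((s 0).erase (g 0)) := by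
  rw [← card_sigma]
  refine card_nbij' (fun f => ⟨Fin.tail f, f 0⟩) (fun p => Fin.cons p.2 p.1) ?_ ?_ ?_ ?_
  · intro f h
    rw [mem_coe, ← Fin.cons_self_tail f, cons_mem_properWalks_succ_iff] at h
    simp only [coe_sigma, Set.mem_sigma_iff, mem_coe, mem_erase]
    exact ⟨h.2.2, h.2.1, h.1⟩
  · rintro ⟨g, v⟩ h
    simp only [coe_sigma, Set.mem_sigma_iff, mem_coe, mem_erase] at h
    simp only [mem_coe, cons_mem_properWalks_succ_iff]
    exact ⟨h.2.2, h.2.1, h.1⟩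
  · rintro f -
    simp
  · rintro ⟨g, v⟩ -
    simp

theorem sub_one_mul_card_properWalks_le (s : ℕ → Finset W) (n : ℕ) :
    (#(s 0) - 1) * #(properWalks (fun i => s (i + 1)) n) ≤ #(properWalks s (n + 1)) := by
  rw [card_properWalks_succ, mul_comm, ← smul_eq_mul, ← sum_const]
  exact sum_le_sum fun _ _ => pred_card_le_card_erase

theorem card_properWalks_const_succ (A : Finset W) (n : ℕ) :
    #(properWalks (fun _ => A) (n + 1)) = (#A - 1) * #(properWalks (fun _ => A) n) := by
  rw [card_properWalks_succ, mul_comm, ← smul_eq_mul, ← sum_const]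
  exact sum_congr rfl fun g hg => card_erase_of_mem ((mem_properWalks.1 hg).1 0)

theorem card_properWalks_const_mul_le_alternate (A B : Finset W) (n : ℕ) :
    #(properWalks (fun _ => A) n) * #(properWalks (fun _ => B) n) ≤
      #(properWalks (alternate A B) n) * #(properWalks (alternate B A) n) := by
  induction n with
  | zero => simp [card_properWalks_zero]
  | succ n ih =>
    have hAB := sub_one_mul_card_properWalks_le (alternate A B) n
    have hBA := sub_one_mul_card_properWalks_le (alternate B A) n
    rw [alternate_succ, alternate_zero] at hAB hBA
    calc #(properWalks (fun _ => A) (n + 1)) * #(properWalks (fun _ => B) (n + 1))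
        = (#A - 1) * (#B - 1) *
          (#(properWalks (fun _ => A) n) * #(properWalks (fun _ => B) n)) := by
          rw [card_properWalks_const_succ, card_properWalks_const_succ]; ring
      _ ≤ (#A - 1) * (#B - 1) *
          (#(properWalks (alternate A B) n) * #(properWalks (alternate B A) n)) := by gcongr
      _ = ((#A - 1) * #(properWalks (alternate B A) n)) *
          ((#B - 1) * #(properWalks (alternate A B) n)) := by ring
      _ ≤ _ := Nat.mul_le_mul hAB hBA

theorem homCount_pathGraph_induce_top (A : Finset W) (n : ℕ) :
    homCount (pathGraph (n + 1)) ((⊤ : SimpleGraph W).induce A) =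
      #(properWalks (fun _ => A) n) := by
  rw [homCount_induce_eq_listHomCount, ← listHomCount_pathGraph_top]

theorem homB_pathGraph_top (A B : Finset W) (n : ℕ) :
    homB (pathGraph (n + 1)) ⊤ (A : Set W) B =
      #(properWalks (alternate A B) n) * #(properWalks (alternate B A) n) := by
  rw [homB_eq_mul_listHomCount (pathGraph.parityColoring _), ← listHomCount_pathGraph_top,
    ← listHomCount_pathGraph_top]
  congr <;> funext i <;>
    simp only [pathGraph.parityColoring_apply_eq_zero_iff, alternate,
      apply_ite ((↑) : Finset W → Set W)]

end ProperWalks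

theorem stmt15_general (q : ℕ) (m : ℕ) (hm : 1 ≤ m) :
    CrossBipartiteSwapping (pathGraph m) (completeGraph (Fin q)) := by
  obtain ⟨n, rfl⟩ := Nat.exists_eq_add_of_le' hm
  intro A B
  obtain ⟨A, rfl⟩ := A.toFinite.exists_finset_coe
  obtain ⟨B, rfl⟩ := B.toFinite.exists_finset_coe
  rw [homCount_pathGraph_induce_top, homCount_pathGraph_induce_top, homB_pathGraph_top]
  exact card_properWalks_const_mul_le_alternate A B n

/-- For every `q ≥ 2`, every path (here on `m ≥ 1` vertices, i.e. of any
length, in particular of odd length `2d−1` and of even length `2d`) is cross-bipartite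
swapping in the complete graph `K_q`. -/
theorem stmt15 (q : ℕ) (hq : 2 ≤ q) (m : ℕ) (hm : 1 ≤ m) :
    CrossBipartiteSwapping (pathGraph m) (completeGraph (Fin q)) :=
  stmt15_general q m hm
end

section
/- For all k ≥ 1, all positive integers r_1,…,r_k, and all q ≥ 1, the complete multipartite graph K(r_1,…,r_k) is cross-bipartite swapping in the complete graph K_q: for all A, B ⊆ V(K_q), hom(K(r_1,…,r_k), K_q[A]) · hom(K(r_1,…,r_k), K_q[B]) ≤ hom_b(K(r_1,…,r_k) × K_2, K_q[A,B]). -/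
open SimpleGraph

/-!
A homomorphism `K(r₁,…,r_k) → K_q[A]` colours each part from `A` so that different parts get
disjoint colour sets; a homomorphism counted by `hom_b` is a pair `(f, g)` of colourings from
`A` and `B` in which `f` on a part never meets `g` on another part. Colour the first part (of
size `r`) first: with `F D` the number of colourings of the remaining parts from `D` and
`T(W, D) = ∑_{x ∈ W^r} F(D ∖ x)`, one gets `hom(A) = T(A, A)` and, by induction on the number
of parts, `hom_b(A, B) ≥ ∑_{x ∈ A^r, y ∈ B^r} F(A ∖ y) F(B ∖ x) = T(B, A) T(A, B)`.
As `F D` grows with `|D|`, it remains to show `T(A, A) T(B, B) ≤ T(B, A) T(A, B)`, and this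
follows from `|B|^r T(A, A) ≤ |A|^r T(B, A)`: a uniformly random `r`-tuple from `B` removes on
average no more of `A` than one from `A` does. That is proved by induction on `r`, one colour
at a time.
-/

open Finset

namespace CompleteMultipartite

variable {α ι : Type}

def PartsDisjoint {V : ι → Type} (f g : ∀ i, V i → α) : Prop :=
  Pairwise fun i j => ∀ a b, f i a ≠ g j b

variable (V : ι → Type)

def PartColoring (A : Finset α) : Type :=
  {f : ∀ i, V i → α // (∀ i a, f i a ∈ A) ∧ PartsDisjoint f f}

def PartColoringPair (A B : Finset α) : Type :=
  {p : (∀ i, V i → α) × (∀ i, V i → α) //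
    (∀ i a, p.1 i a ∈ A) ∧ (∀ i a, p.2 i a ∈ B) ∧ PartsDisjoint p.1 p.2}

instance [Finite ι] [∀ i, Finite (V i)] (A : Finset α) : Finite (PartColoring V A) :=
  Finite.of_injective (fun f i a => (⟨f.1 i a, f.2.1 i a⟩ : A)) fun _ _ h =>
    Subtype.ext <| by simpa [funext_iff] using h

instance [Finite ι] [∀ i, Finite (V i)] (A B : Finset α) : Finite (PartColoringPair V A B) :=
  Finite.of_injective (fun p => (fun i a => (⟨p.1.1 i a, p.2.1 i a⟩ : A),
      fun i a => (⟨p.1.2 i a, p.2.2.1 i a⟩ : B))) fun _ _ h =>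
    Subtype.ext <| by simpa [funext_iff, Prod.ext_iff] using h

def homEquivPartColoring (A : Finset α) :
    (completeMultipartiteGraph V →g (⊤ : SimpleGraph α).induce (A : Set α)) ≃
      PartColoring V A where
  toFun φ := ⟨fun i a => φ ⟨i, a⟩, fun i a => (φ ⟨i, a⟩).2, fun i j hij a b h =>
    (φ.map_adj (show (completeMultipartiteGraph V).Adj ⟨i, a⟩ ⟨j, b⟩ from hij)).ne
      (Subtype.ext h)⟩
  invFun f := ⟨fun v => ⟨f.1 v.1 v.2, f.2.1 _ _⟩, fun huv => f.2.2 huv _ _⟩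
  left_inv _ := rfl
  right_inv _ := rfl

def homEquivPartColoringPair (A B : Finset α) :
    {φ : tensorK2 (completeMultipartiteGraph V) →g (⊤ : SimpleGraph α) //
      (∀ v, φ (v, 0) ∈ (A : Set α)) ∧ ∀ v, φ (v, 1) ∈ (B : Set α)} ≃
      PartColoringPair V A B where
  toFun φ := ⟨(fun i a => φ.1 (⟨i, a⟩, 0), fun i a => φ.1 (⟨i, a⟩, 1)),
    fun _ _ => φ.2.1 _, fun _ _ => φ.2.2 _, fun i j hij a b =>
      φ.1.map_adj (show (tensorK2 (completeMultipartiteGraph V)).Adj (⟨i, a⟩, 0) (⟨j, b⟩, 1)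
        from ⟨hij, zero_ne_one⟩)⟩
  invFun p := ⟨⟨fun w => ![p.1.1, p.1.2] w.2 w.1.1 w.1.2, by
      rintro ⟨⟨i, a⟩, s⟩ ⟨⟨j, b⟩, t⟩ ⟨hij, hst⟩
      fin_cases s <;> fin_cases t
      · exact absurd rfl hst
      · exact p.2.2.2 hij a b
      · exact (p.2.2.2 (Ne.symm hij) b a).symm
      · exact absurd rfl hst⟩, fun _ => p.2.1 _ _, fun _ => p.2.2.1 _ _⟩
  left_inv φ := Subtype.ext <| RelHom.ext fun ⟨v, s⟩ => by fin_cases s <;> rfl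
  right_inv _ := rfl

variable {V}

lemma card_partColoring_le_of_card_le [Finite ι] [∀ i, Finite (V i)] {A A' : Finset α}
    (h : #A ≤ #A') : Nat.card (PartColoring V A) ≤ Nat.card (PartColoring V A') := by
  obtain ⟨e⟩ := Function.Embedding.nonempty_of_card_le (α := A) (β := A') (by simpa using h)
  refine Nat.card_le_card_of_injective (fun f => ⟨fun i a => e ⟨f.1 i a, f.2.1 i a⟩,
    fun i a => (e _).2, fun i j hij a b hab => f.2.2 hij a b ?_⟩) fun f g hfg => Subtype.ext ?_
  · simpa using e.injective (Subtype.ext hab)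
  · simpa [funext_iff, Subtype.val_inj] using congrArg Subtype.val hfg

section Cons

variable {k : ℕ} {V : Fin (k + 1) → Type}

lemma forall_cons_mem {A : Finset α} {x : V 0 → α} {g : ∀ i : Fin k, V i.succ → α}
    (hx : ∀ a, x a ∈ A) (hg : ∀ i b, g i b ∈ A) :
    ∀ i a, (Fin.cons x g : ∀ i, V i → α) i a ∈ A := by
  intro i
  cases i using Fin.cases
  · simpa using hx
  · simpa using hg _

lemma PartsDisjoint.cons {x y : V 0 → α} {f g : ∀ i : Fin k, V i.succ → α}
    (hxg : ∀ j a b, x a ≠ g j b) (hfy : ∀ j a b, f j a ≠ y b) (h : PartsDisjoint f g) :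
    PartsDisjoint (Fin.cons x f : ∀ i, V i → α) (Fin.cons y g : ∀ i, V i → α) := by
  intro i j hij
  cases i using Fin.cases <;> cases j using Fin.cases
  · exact absurd rfl hij
  · simpa using hxg _
  · simpa using hfy _
  · simpa using h (by simpa using hij)

end Cons

variable [DecidableEq α]

def usedColors {β : Type} [Fintype β] {A : Finset α} (x : β → A) : Finset α :=
  univ.image fun b => (x b : α)

lemma mem_sdiff_usedColors {β : Type} [Fintype β] {A D : Finset α} {x : β → A} {c : α} :
    c ∈ D \ usedColors x ↔ c ∈ D ∧ ∀ b, (x b : α) ≠ c := by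
  simp [usedColors]

lemma usedColors_cons {n : ℕ} {A : Finset α} (a : A) (x : Fin n → A) :
    usedColors (Fin.cons a x : Fin (n + 1) → A) = insert (a : α) (usedColors x) := by
  ext c
  simp [usedColors, Fin.exists_fin_succ, eq_comm]

section TupleSum

def tupleSum (F : Finset α → ℕ) (W D : Finset α) (r : ℕ) : ℕ :=
  ∑ x : Fin r → W, F (D \ usedColors x)

variable {F : Finset α → ℕ}

lemma tupleSum_zero (F : Finset α → ℕ) (W D : Finset α) : tupleSum F W D 0 = F D := by
  simp [tupleSum, usedColors]

lemma tupleSum_succ (F : Finset α → ℕ) (W D : Finset α) (r : ℕ) :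
    tupleSum F W D (r + 1) = ∑ w : W, tupleSum F W (D.erase w) r := by
  rw [tupleSum, ← Fintype.sum_equiv (Fin.consEquiv fun _ => W) _ _ fun _ => rfl,
    Fintype.sum_prod_type]
  refine sum_congr rfl fun w _ => sum_congr rfl fun x _ => ?_
  change F (D \ usedColors (Fin.cons w x)) = _
  rw [usedColors_cons, sdiff_insert, erase_sdiff_comm]

lemma tupleSum_mono (hF : ∀ ⦃D D' : Finset α⦄, #D ≤ #D' → F D ≤ F D') (W : Finset α)
    {D D' : Finset α} (h : D ⊆ D') (r : ℕ) : tupleSum F W D r ≤ tupleSum F W D' r :=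
  sum_le_sum fun _ _ => hF (card_le_card (sdiff_subset_sdiff h le_rfl))

lemma tupleSum_eq_zero (F : Finset α → ℕ) {W : Finset α} {r : ℕ} (h : #W ^ r = 0)
    (D : Finset α) : tupleSum F W D r = 0 := by
  have : IsEmpty (Fin r → W) := by
    rw [← Fintype.card_eq_zero_iff]
    simpa using h
  simp [tupleSum]

lemma sum_erase_le {W C : Finset α} (hCW : C ⊆ W) (g : Finset α → ℕ) {a : ℕ}
    (ha : ∀ w ∈ C, g (C.erase w) ≤ a) : ∑ w ∈ W, g (C.erase w) ≤ #C * a + #(W \ C) * g C := by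
  rw [← sum_sdiff hCW, add_comm]
  gcongr
  · simpa using sum_le_card_nsmul C _ a ha
  · rw [← smul_eq_mul, ← sum_const]
    exact (sum_congr rfl fun w hw => by rw [erase_eq_of_notMem (mem_sdiff.1 hw).2]).le

lemma le_sum_erase (U C : Finset α) (g : Finset α → ℕ) {a b : ℕ}
    (ha : ∀ u ∈ U ∩ C, a ≤ g (C.erase u)) (hb : b ≤ g C) :
    #(U ∩ C) * a + #(U \ C) * b ≤ ∑ u ∈ U, g (C.erase u) := by
  rw [← sum_inter_add_sum_sdiff U C]
  gcongr
  · simpa using card_nsmul_le_sum _ _ a ha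
  · rw [← smul_eq_mul, ← sum_const]
    exact sum_le_sum fun u hu => by rwa [erase_eq_of_notMem (mem_sdiff.1 hu).2]

lemma card_mul_card_inter_le {U W C : Finset α} (hCW : C ⊆ W) (hWC : W \ C ⊆ U) :
    #W * #(U ∩ C) ≤ #U * #C := by
  have hU : #(W \ C) + #(U ∩ C) ≤ #U := by
    rw [← card_union_of_disjoint (disjoint_sdiff_self_left.mono_right inter_subset_right)]
    exact card_le_card (union_subset hWC inter_subset_left)
  have hi : #(U ∩ C) ≤ #C := card_le_card inter_subset_right
  have hc : #C ≤ #W := card_le_card hCW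
  rw [card_sdiff_of_subset hCW] at hU
  zify [hc] at hU hi ⊢
  nlinarith [mul_nonneg (sub_nonneg.2 (Int.ofNat_le.2 hc)) (sub_nonneg.2 hi)]

lemma mul_add_mul_le_of_le {u w c i a b : ℕ} (hab : a ≤ b) (hc : c ≤ w) (hi : i ≤ u)
    (h : w * i ≤ u * c) : u * (c * a + (w - c) * b) ≤ w * (i * a + (u - i) * b) := by
  zify [hab, hc, hi] at h ⊢
  nlinarith [mul_le_mul_of_nonneg_right h (sub_nonneg.2 (Int.ofNat_le.2 hab))]

/- Only `#C'` matters for `tupleSum F W C' r`, but letting `C'` range over all subsets of `W` of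
that size spares a symmetry argument in the induction. -/
lemma pow_mul_tupleSum_le (hF : ∀ ⦃D D' : Finset α⦄, #D ≤ #D' → F D ≤ F D') (r : ℕ) :
    ∀ {U W C C' : Finset α}, C ⊆ W → C' ⊆ W → W \ C ⊆ U → #C = #C' →
      #U ^ r * tupleSum F W C' r ≤ #W ^ r * tupleSum F U C r := by
  induction r with
  | zero =>
    intro U W C C' _ _ _ hcard
    simpa [tupleSum_zero] using hF hcard.ge
  | succ r ih =>
    intro U W C C' hCW hC'W hWC hcard
    set a := C'.sup fun w => #U ^ r * tupleSum F W (C'.erase w) r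
    set b := #U ^ r * tupleSum F W C' r
    have hab : a ≤ b :=
      Finset.sup_le fun w _ => Nat.mul_le_mul_left _ (tupleSum_mono hF W (erase_subset _ _) r)
    have hWsum := sum_erase_le hC'W (fun D => #U ^ r * tupleSum F W D r) (a := a)
      fun w hw => le_sup (f := fun w => #U ^ r * tupleSum F W (C'.erase w) r) hw
    have hUsum := le_sum_erase U C (fun D => #W ^ r * tupleSum F U D r) (a := a)
      (fun u hu => Finset.sup_le fun w hw => by
        obtain ⟨huU, huC⟩ := mem_inter.1 hu
        refine ih ((erase_subset _ _).trans hCW) ((erase_subset _ _).trans hC'W) ?_ ?_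
        · rw [sdiff_erase (hCW huC)]
          exact insert_subset huU hWC
        · rw [card_erase_of_mem huC, card_erase_of_mem hw, hcard])
      (ih hCW hC'W hWC hcard)
    have hmass : #W * #(U ∩ C) ≤ #U * #C' := hcard ▸ card_mul_card_inter_le hCW hWC
    have hUC : #(U \ C) = #U - #(U ∩ C) := by
      have := card_inter_add_card_sdiff U C
      omega
    rw [tupleSum_succ, tupleSum_succ]
    calc #U ^ (r + 1) * ∑ w : W, tupleSum F W (C'.erase w) r
        = #U * ∑ w ∈ W, #U ^ r * tupleSum F W (C'.erase w) r := by
          rw [← sum_coe_sort W, pow_succ', mul_assoc, ← mul_sum]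
      _ ≤ #U * (#C' * a + #(W \ C') * b) := Nat.mul_le_mul_left _ hWsum
      _ ≤ #W * (#(U ∩ C) * a + #(U \ C) * b) := by
          rw [card_sdiff_of_subset hC'W, hUC]
          exact mul_add_mul_le_of_le hab (card_le_card hC'W)
            (card_le_card inter_subset_left) hmass
      _ ≤ #W * ∑ u ∈ U, #W ^ r * tupleSum F U (C.erase u) r := Nat.mul_le_mul_left _ hUsum
      _ = #W ^ (r + 1) * ∑ u : U, tupleSum F U (C.erase u) r := by
          rw [← sum_coe_sort U, pow_succ', mul_assoc, ← mul_sum]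

lemma tupleSum_mul_tupleSum_le (hF : ∀ ⦃D D' : Finset α⦄, #D ≤ #D' → F D ≤ F D')
    (A B : Finset α) (r : ℕ) :
    tupleSum F A A r * tupleSum F B B r ≤ tupleSum F B A r * tupleSum F A B r := by
  have hAB := pow_mul_tupleSum_le hF r subset_rfl subset_rfl (by simp) rfl (U := B) (W := A)
  have hBA := pow_mul_tupleSum_le hF r subset_rfl subset_rfl (by simp) rfl (U := A) (W := B)
  rcases Nat.eq_zero_or_pos (#A ^ r * #B ^ r) with h | h
  · rcases mul_eq_zero.1 h with h | h <;> simp [tupleSum_eq_zero F h]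
  · refine Nat.le_of_mul_le_mul_left ?_ h
    calc #A ^ r * #B ^ r * (tupleSum F A A r * tupleSum F B B r)
        = (#B ^ r * tupleSum F A A r) * (#A ^ r * tupleSum F B B r) := by ring
      _ ≤ (#A ^ r * tupleSum F B A r) * (#B ^ r * tupleSum F A B r) := Nat.mul_le_mul hAB hBA
      _ = #A ^ r * #B ^ r * (tupleSum F B A r * tupleSum F A B r) := by ring

end TupleSum

def partColoringSuccEquiv {k : ℕ} (V : Fin (k + 1) → Type) [Fintype (V 0)] (A : Finset α) :
    PartColoring V A ≃
      Σ x : V 0 → A, PartColoring (fun i : Fin k => V i.succ) (A \ usedColors x) where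
  toFun f := ⟨fun a => ⟨f.1 0 a, f.2.1 0 a⟩, fun i => f.1 i.succ,
    fun i b => mem_sdiff_usedColors.2 ⟨f.2.1 _ _, fun a => f.2.2 (Fin.succ_ne_zero i).symm a b⟩,
    fun _ _ hij => f.2.2 (Fin.succ_injective _ |>.ne hij)⟩
  invFun p := ⟨Fin.cons (fun a => (p.1 a : α)) p.2.1,
    forall_cons_mem (fun a => (p.1 a).2) fun i b => (mem_sdiff_usedColors.1 (p.2.2.1 i b)).1,
    PartsDisjoint.cons (fun j a b => (mem_sdiff_usedColors.1 (p.2.2.1 j b)).2 a)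
      (fun j a b => ((mem_sdiff_usedColors.1 (p.2.2.1 j a)).2 b).symm) p.2.2.2⟩
  left_inv f := Subtype.ext (Fin.cons_self_tail f.1)
  right_inv _ := rfl

def partColoringPairSuccEquiv {k : ℕ} (V : Fin (k + 1) → Type) [Fintype (V 0)]
    (A B : Finset α) :
    PartColoringPair V A B ≃ Σ z : (V 0 → A) × (V 0 → B),
      PartColoringPair (fun i : Fin k => V i.succ) (A \ usedColors z.2) (B \ usedColors z.1) where
  toFun p := ⟨(fun a => ⟨p.1.1 0 a, p.2.1 0 a⟩, fun a => ⟨p.1.2 0 a, p.2.2.1 0 a⟩),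
    (fun i => p.1.1 i.succ, fun i => p.1.2 i.succ),
    fun i b => mem_sdiff_usedColors.2
      ⟨p.2.1 _ _, fun a => (p.2.2.2 (Fin.succ_ne_zero i) b a).symm⟩,
    fun i b => mem_sdiff_usedColors.2
      ⟨p.2.2.1 _ _, fun a => p.2.2.2 (Fin.succ_ne_zero i).symm a b⟩,
    fun _ _ hij => p.2.2.2 (Fin.succ_injective _ |>.ne hij)⟩
  invFun q := ⟨(Fin.cons (fun a => (q.1.1 a : α)) q.2.1.1,
      Fin.cons (fun a => (q.1.2 a : α)) q.2.1.2),
    forall_cons_mem (fun a => (q.1.1 a).2) fun i b => (mem_sdiff_usedColors.1 (q.2.2.1 i b)).1,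
    forall_cons_mem (fun a => (q.1.2 a).2) fun i b => (mem_sdiff_usedColors.1 (q.2.2.2.1 i b)).1,
    PartsDisjoint.cons (fun j a b => (mem_sdiff_usedColors.1 (q.2.2.2.1 j b)).2 a)
      (fun j a b => ((mem_sdiff_usedColors.1 (q.2.2.1 j a)).2 b).symm) q.2.2.2.2⟩
  left_inv p := Subtype.ext (Prod.ext (Fin.cons_self_tail p.1.1) (Fin.cons_self_tail p.1.2))
  right_inv _ := rfl

lemma card_partColoring_succ {k : ℕ} (V : Fin (k + 1) → Type) [∀ i, Fintype (V i)]
    [DecidableEq (V 0)] (A : Finset α) :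
    Nat.card (PartColoring V A) =
      ∑ x : V 0 → A, Nat.card (PartColoring (fun i : Fin k => V i.succ) (A \ usedColors x)) := by
  rw [Nat.card_congr (partColoringSuccEquiv V A), Nat.card_sigma]

lemma card_partColoringPair_succ {k : ℕ} (V : Fin (k + 1) → Type) [∀ i, Fintype (V i)]
    [DecidableEq (V 0)] (A B : Finset α) :
    Nat.card (PartColoringPair V A B) = ∑ z : (V 0 → A) × (V 0 → B),
      Nat.card (PartColoringPair (fun i : Fin k => V i.succ)
        (A \ usedColors z.2) (B \ usedColors z.1)) := by
  rw [Nat.card_congr (partColoringPairSuccEquiv V A B), Nat.card_sigma]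

theorem card_mul_card_le_card_partColoringPair {k : ℕ} (r : Fin k → ℕ) (A B : Finset α) :
    Nat.card (PartColoring (fun i => Fin (r i)) A) *
        Nat.card (PartColoring (fun i => Fin (r i)) B) ≤
      Nat.card (PartColoringPair (fun i => Fin (r i)) A B) := by
  induction k generalizing A B with
  | zero =>
    have hle (D : Finset α) : Nat.card (PartColoring (fun i => Fin (r i)) D) ≤ 1 :=
      Finite.card_le_one_iff_subsingleton.2 ⟨fun f g => Subtype.ext (funext fun i => i.elim0)⟩
    have : Nonempty (PartColoringPair (fun i => Fin (r i)) A B) :=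
      ⟨⟨(fun i => i.elim0, fun i => i.elim0), fun i => i.elim0, fun i => i.elim0,
        fun i => i.elim0⟩⟩
    exact (Nat.mul_le_mul (hle A) (hle B)).trans Nat.card_pos
  | succ k ih =>
    let F (D : Finset α) := Nat.card (PartColoring (fun i : Fin k => Fin (r i.succ)) D)
    have hF : ∀ ⦃D D' : Finset α⦄, #D ≤ #D' → F D ≤ F D' := fun _ _ =>
      card_partColoring_le_of_card_le
    have hpair : tupleSum F B A (r 0) * tupleSum F A B (r 0) ≤
        Nat.card (PartColoringPair (fun i => Fin (r i)) A B) := by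
      rw [card_partColoringPair_succ, Fintype.sum_prod_type, tupleSum, tupleSum, sum_mul_sum,
        sum_comm]
      exact sum_le_sum fun x _ => sum_le_sum fun y _ => ih _ _ _
    rw [card_partColoring_succ, card_partColoring_succ]
    exact (tupleSum_mul_tupleSum_le hF A B (r 0)).trans hpair

end CompleteMultipartite

open CompleteMultipartite in
theorem crossBipartiteSwapping_completeMultipartiteGraph_completeGraph {α : Type} [Finite α]
    {k : ℕ} (r : Fin k → ℕ) :
    CrossBipartiteSwapping (completeMultipartiteGraph fun i => Fin (r i)) (completeGraph α) := by
  classical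
  intro A B
  obtain ⟨A, rfl⟩ := A.toFinite.exists_finset_coe
  obtain ⟨B, rfl⟩ := B.toFinite.exists_finset_coe
  rw [homCount, homCount, homB, Nat.card_congr (homEquivPartColoring _ A),
    Nat.card_congr (homEquivPartColoring _ B), Nat.card_congr (homEquivPartColoringPair _ A B)]
  exact card_mul_card_le_card_partColoringPair r A B

theorem stmt17_general (k q : ℕ) (r : Fin k → ℕ) :
    CrossBipartiteSwapping (completeMultipartiteGraph fun i => Fin (r i))
      (completeGraph (Fin q)) :=
  crossBipartiteSwapping_completeMultipartiteGraph_completeGraph r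

/-- For all `k ≥ 1`, positive part sizes `r₁,…,r_k` and `q ≥ 1`, the
complete multipartite graph `K(r₁,…,r_k)` is cross-bipartite swapping in `K_q`. -/
theorem stmt17 (k q : ℕ) (hk : 1 ≤ k) (hq : 1 ≤ q)
    (r : Fin k → ℕ) (hr : ∀ i, 1 ≤ r i) :
    CrossBipartiteSwapping (completeMultipartiteGraph fun i => Fin (r i))
      (completeGraph (Fin q)) :=
  stmt17_general k q r
end
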